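/- arXiv:1702.03075 — 5 statements merged into one kernel-verified Lean document; each statement's English description precedes it below -/
import Mathlib

section
/- For every positive integer k, every k-in-out graph has at least 2k−1 vertices. -/
/-- A directed path in the digraph with edge relation `E` and vertex set `Vset`:
a nonempty list of distinct vertices of `Vset`, with consecutive vertices joined
by directed edges. -/
def IsPathOn {α : Type*} (E : α → α → Prop) (Vset : Finset α) (p : List α) : Prop :=
  p ≠ [] ∧ p.Nodup ∧ p.Chain' E ∧ ∀ x ∈ p, x ∈ Vset

/-- A Hamiltonian path from `u` to `v` in the digraph with edge relation `E`
and vertex set `Vset`: a list of distinct vertices containing every vertex of `Vset`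
(and no others), starting at `u`, ending at `v`, with consecutive vertices joined
by directed edges. -/
def IsHamPathOn {α : Type*} (E : α → α → Prop) (Vset : Finset α) (u v : α)
    (p : List α) : Prop :=
  p.Nodup ∧ p.Chain' E ∧ p.head? = some u ∧ p.getLast? = some v ∧ ∀ x, x ∈ p ↔ x ∈ Vset

/-- The single visit condition: there is no collection of two or more pairwise
vertex-disjoint directed paths, each starting at an incoming vertex and ending at an
outgoing vertex, whose union visits every vertex. -/
def SingleVisit {α : Type*} (E : α → α → Prop) (Vset : Finset α) {k : ℕ}
    (inc out : Fin k → α) : Prop :=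
  ¬ ∃ P : Finset (List α), 2 ≤ P.card ∧
      (∀ p ∈ P, IsPathOn E Vset p ∧ (∃ j, p.head? = some (inc j)) ∧
        (∃ m, p.getLast? = some (out m))) ∧
      (∀ p ∈ P, ∀ q ∈ P, p ≠ q → ∀ x, x ∈ p → x ∉ q) ∧
      (∀ x ∈ Vset, ∃ p ∈ P, x ∈ p)

/-- A `k`-in-out graph: a digraph (no loops, all edges within the vertex set) together
with `k` distinct incoming vertices and `k` distinct outgoing vertices (the two sets may
overlap), satisfying the paired vertices condition and the single visit condition. -/
structure IsInOutGraph {α : Type*} (E : α → α → Prop) (Vset : Finset α) {k : ℕ}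
    (inc out : Fin k → α) : Prop where
  no_loops : ∀ x, ¬ E x x
  edge_mem : ∀ x y, E x y → x ∈ Vset ∧ y ∈ Vset
  inc_mem : ∀ j, inc j ∈ Vset
  out_mem : ∀ j, out j ∈ Vset
  inc_inj : Function.Injective inc
  out_inj : Function.Injective out
  paired : ∀ j m, (∃ p, IsHamPathOn E Vset (inc j) (out m) p) ↔ j = m
  single_visit : SingleVisit E Vset inc out


/-!
Take a Hamiltonian path `p` from `i₁` to `o₁`, which exists by the paired vertices condition.
The other `k - 1` incoming vertices sit at positions other than the first, and the other `k - 1`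
outgoing vertices at positions other than the last. If `|V| ≤ 2k - 2`, then among the `|V| - 1`
consecutive pairs of `p` one goes from some outgoing vertex `o_m` to some incoming vertex `i_j`.
Cutting `p` there yields two disjoint paths `i₁ → o_m` and `i_j → o₁` covering `V`, against the
single visit condition.
-/

theorem List.exists_eq_append_cons_cons_of_length_sub_one_lt {α : Type*} [DecidableEq α]
    (p : List α) (S T : Finset α) (hS : ∀ b ∈ S, b ∈ p.tail) (hT : ∀ a ∈ T, a ∈ p.dropLast)
    (hcard : p.length - 1 < S.card + T.card) :
    ∃ l₁ a b l₂, p = l₁ ++ a :: b :: l₂ ∧ a ∈ T ∧ b ∈ S := by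
  induction p generalizing S T with
  | nil => simp_all [Finset.Nonempty]
  | cons x t ih =>
    rcases t with _ | ⟨y, rest⟩
    · simp_all [Finset.Nonempty]
    by_cases hxy : x ∈ T ∧ y ∈ S
    · exact ⟨[], x, y, rest, rfl, hxy⟩
    have hS' (b) (hb : b ∈ S.erase y) : b ∈ rest :=
      (List.mem_cons.1 (hS b (Finset.mem_of_mem_erase hb))).resolve_left (Finset.ne_of_mem_erase hb)
    have hT' (a) (ha : a ∈ T.erase x) : a ∈ (y :: rest).dropLast :=
      (List.mem_cons.1 (hT a (Finset.mem_of_mem_erase ha))).resolve_left (Finset.ne_of_mem_erase ha)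
    have hcard' : rest.length < (S.erase y).card + (T.erase x).card := by
      simp only [List.length_cons, Nat.add_sub_cancel] at hcard
      rcases not_and_or.1 hxy with hx | hy
      · rw [T.erase_eq_of_notMem hx]
        have := S.pred_card_le_card_erase (a := y)
        omega
      · rw [S.erase_eq_of_notMem hy]
        have := T.pred_card_le_card_erase (a := x)
        omega
    obtain ⟨l₁, a, b, l₂, hsplit, ha, hb⟩ := ih (S.erase y) (T.erase x) hS' hT' hcard'
    exact ⟨x :: l₁, a, b, l₂, by rw [hsplit, List.cons_append], Finset.mem_of_mem_erase ha,
      Finset.mem_of_mem_erase hb⟩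

section HamiltonianPath

variable {α : Type*} {E : α → α → Prop} {Vset : Finset α} {u v : α} {p : List α}

theorem IsHamPathOn.length_eq_card [DecidableEq α] (hp : IsHamPathOn E Vset u v p) :
    p.length = Vset.card := by
  rw [← List.toFinset_card_of_nodup hp.1]
  congr 1
  ext x
  simp [hp.2.2.2.2 x]

theorem IsHamPathOn.isPathOn_of_isInfix (hp : IsHamPathOn E Vset u v p) {q : List α}
    (hq : q ≠ []) (hqp : q <:+: p) : IsPathOn E Vset q :=
  ⟨hq, hp.1.sublist hqp.sublist, hp.2.1.infix hqp, fun x hx => (hp.2.2.2.2 x).1 (hqp.subset hx)⟩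

theorem IsHamPathOn.mem_tail (hp : IsHamPathOn E Vset u v p) {x : α} (hx : x ∈ Vset)
    (hxu : x ≠ u) : x ∈ p.tail := by
  obtain ⟨-, -, hhead, -, hmem⟩ := hp
  obtain ⟨t, rfl⟩ := List.head?_eq_some_iff.1 hhead
  exact (List.mem_cons.1 ((hmem x).2 hx)).resolve_left hxu

theorem IsHamPathOn.mem_dropLast (hp : IsHamPathOn E Vset u v p) {x : α} (hx : x ∈ Vset)
    (hxv : x ≠ v) : x ∈ p.dropLast := by
  obtain ⟨-, -, -, hlast, hmem⟩ := hp
  obtain ⟨t, rfl⟩ := List.getLast?_eq_some_iff.1 hlast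
  rw [List.dropLast_concat]
  exact (List.mem_append.1 ((hmem x).2 hx)).resolve_right (by simpa using hxv)

end HamiltonianPath

theorem SingleVisit.not_isHamPathOn_append {α : Type*} {E : α → α → Prop} {Vset : Finset α}
    {k : ℕ} {inc out : Fin k → α} (hsv : SingleVisit E Vset inc out) {j m j' m' : Fin k}
    {q r : List α} (hq : q.getLast? = some (out m')) (hr : r.head? = some (inc j')) :
    ¬ IsHamPathOn E Vset (inc j) (out m) (q ++ r) := by
  classical
  intro hp
  have hq0 : q ≠ [] := by rintro rfl; simp at hq
  have hr0 : r ≠ [] := by rintro rfl; simp at hr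
  have hdisj := List.disjoint_of_nodup_append hp.1
  refine hsv ⟨{q, r}, ?_, ?_, ?_, ?_⟩
  · rw [Finset.card_pair]
    rintro rfl
    obtain ⟨x, hx⟩ := List.exists_mem_of_ne_nil q hq0
    exact hdisj hx hx
  · simp only [Finset.mem_insert, Finset.mem_singleton]
    rintro s (rfl | rfl)
    · exact ⟨hp.isPathOn_of_isInfix hq0 (List.prefix_append _ _).isInfix,
        ⟨j, (List.head?_append_of_ne_nil s hq0).symm.trans hp.2.2.1⟩, ⟨m', hq⟩⟩
    · exact ⟨hp.isPathOn_of_isInfix hr0 (List.suffix_append _ _).isInfix, ⟨j', hr⟩,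
        ⟨m, (List.getLast?_append_of_ne_nil q hr0).symm.trans hp.2.2.2.1⟩⟩
  · simp only [Finset.mem_insert, Finset.mem_singleton]
    rintro s (rfl | rfl) t (rfl | rfl) hst x hx
    exacts [absurd rfl hst, hdisj hx, fun hxt => hdisj hxt hx, absurd rfl hst]
  · intro x hx
    rcases List.mem_append.1 ((hp.2.2.2.2 x).2 hx) with hxq | hxr
    exacts [⟨q, by simp, hxq⟩, ⟨r, by simp, hxr⟩]

theorem inOut_card_lower_bound_general {α : Type*} {k : ℕ} (hk : 1 ≤ k)
    (E : α → α → Prop) (Vset : Finset α) (inc out : Fin k → α)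
    (h : IsInOutGraph E Vset inc out) :
    2 * k - 1 ≤ Vset.card := by
  classical
  by_contra! hsmall
  let j₀ : Fin k := ⟨0, hk⟩
  obtain ⟨p, hp⟩ := (h.paired j₀ j₀).2 rfl
  have hothers {f : Fin k → α} (hf : f.Injective) :
      ((Finset.univ.erase j₀).image f).card = k - 1 := by
    simp [Finset.card_image_of_injective _ hf]
  have hlength : p.length - 1 < ((Finset.univ.erase j₀).image inc).card
      + ((Finset.univ.erase j₀).image out).card := by
    rw [hothers h.inc_inj, hothers h.out_inj, hp.length_eq_card]
    have := Finset.card_pos.2 ⟨_, h.inc_mem j₀⟩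
    omega
  obtain ⟨l₁, a, b, l₂, rfl, ha, hb⟩ :=
    p.exists_eq_append_cons_cons_of_length_sub_one_lt _ _
      (by
        simp only [Finset.mem_image, Finset.mem_erase]
        rintro _ ⟨j, ⟨hj, -⟩, rfl⟩
        exact hp.mem_tail (h.inc_mem j) (h.inc_inj.ne hj))
      (by
        simp only [Finset.mem_image, Finset.mem_erase]
        rintro _ ⟨m, ⟨hm, -⟩, rfl⟩
        exact hp.mem_dropLast (h.out_mem m) (h.out_inj.ne hm))
      hlength
  obtain ⟨m, -, rfl⟩ := Finset.mem_image.1 ha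
  obtain ⟨j, -, rfl⟩ := Finset.mem_image.1 hb
  exact h.single_visit.not_isHamPathOn_append (q := l₁ ++ [out m]) (r := inc j :: l₂)
    (m' := m) (j' := j) (by simp) (by simp) (by simpa using hp)

/-- every `k`-in-out graph (with `k ≥ 1`) has at least `2k - 1` vertices. -/
theorem inOut_card_lower_bound {α : Type*} [DecidableEq α] {k : ℕ} (hk : 1 ≤ k)
    (E : α → α → Prop) (Vset : Finset α) (inc out : Fin k → α)
    (h : IsInOutGraph E Vset inc out) :
    2 * k - 1 ≤ Vset.card :=
  inOut_card_lower_bound_general hk E Vset inc out h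
end

section
/- For every positive integer k, every k-in-out graph having exactly 2k−1 vertices has at least 4k−4 directed edges. -/
/-!
Fix a Hamiltonian path from `inc j` to `out m`. It never steps from an outgoing to an incoming
vertex, since cutting it there would give two disjoint in-out paths covering every vertex. Hence
the `k - 1` incoming vertices other than its start are entered from the `k - 1` non-outgoing
vertices, so every non-outgoing vertex is followed by an incoming one and every non-incoming
vertex is preceded by an outgoing one. If the path from `inc j` to `out j` enters a non-incoming
vertex `x` from `out m`, the path from `inc m` to `out m` enters `x` from another outgoing vertex;
so each of the `k - 1` non-incoming vertices has two in-edges, and dually each of the `k - 1`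
non-outgoing vertices has two out-edges into incoming vertices, giving `4k - 4` distinct edges.
-/

open Finset

namespace List

variable {α : Type*} {l : List α} {x y : α}

theorem mem_consecutivePairs_iff : (x, y) ∈ l.consecutivePairs ↔ [x, y] <:+: l := by
  induction l with
  | nil => simp
  | cons a l ih =>
    cases l with
    | nil => simp [consecutivePairs, infix_cons_iff]
    | cons b l =>
      simp only [consecutivePairs, tail_cons, zip_cons_cons, mem_cons, Prod.mk.injEq] at ih ⊢
      rw [ih, infix_cons_iff (l₂ := b :: l)]
      simp

theorem mem_consecutivePairs_reverse :
    (y, x) ∈ l.reverse.consecutivePairs ↔ (x, y) ∈ l.consecutivePairs := by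
  simp only [mem_consecutivePairs_iff, ← reverse_infix (l₁ := [y, x]), reverse_reverse]
  simp

theorem IsChain.rel_of_mem_consecutivePairs {R : α → α → Prop} (h : l.IsChain R)
    (hxy : (x, y) ∈ l.consecutivePairs) : R x y :=
  isChain_pair.1 (h.infix (mem_consecutivePairs_iff.1 hxy))

theorem exists_mem_consecutivePairs_of_ne_head? (hx : x ∈ l) (hne : l.head? ≠ some x) :
    ∃ w, (w, x) ∈ l.consecutivePairs := by
  obtain ⟨s, t, rfl⟩ := append_of_mem hx
  obtain rfl | ⟨s, w, rfl⟩ := eq_nil_or_concat s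
  · simp at hne
  · exact ⟨w, mem_consecutivePairs_iff.2 ⟨s, t, by simp⟩⟩

theorem exists_mem_consecutivePairs_of_ne_getLast? (hx : x ∈ l) (hne : l.getLast? ≠ some x) :
    ∃ y, (x, y) ∈ l.consecutivePairs := by
  obtain ⟨y, hy⟩ := exists_mem_consecutivePairs_of_ne_head? (mem_reverse.2 hx)
    (by rwa [head?_reverse])
  exact ⟨y, mem_consecutivePairs_reverse.1 hy⟩

theorem Nodup.head?_ne_of_mem_consecutivePairs (hl : l.Nodup)
    (hxy : (x, y) ∈ l.consecutivePairs) : l.head? ≠ some y := by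
  cases l with
  | nil => simp
  | cons a t =>
    rintro ⟨⟩
    exact (nodup_cons.1 hl).1 (of_mem_zip hxy).2

theorem Nodup.getLast?_ne_of_mem_consecutivePairs (hl : l.Nodup)
    (hxy : (x, y) ∈ l.consecutivePairs) : l.getLast? ≠ some x := by
  rw [← head?_reverse]
  exact (nodup_reverse.2 hl).head?_ne_of_mem_consecutivePairs
    (mem_consecutivePairs_reverse.2 hxy)

theorem countP_consecutivePairs_snd (p : α → Bool) :
    l.consecutivePairs.countP (fun e => p e.2) = l.tail.countP p := by
  rw [← Function.comp_def, ← countP_map, map_snd_zip (by simp)]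

theorem countP_consecutivePairs_fst_le (p : α → Bool) :
    l.consecutivePairs.countP (fun e => p e.1) ≤ l.countP p := by
  rw [← Function.comp_def, ← countP_map, consecutivePairs, zip_eq_zip_take_min,
    map_fst_zip (by simp)]
  exact (take_sublist _ _).countP_le

theorem imp_of_countP_le_of_imp {p q : α → Bool} (hpq : ∀ a ∈ l, p a → q a)
    (hqp : l.countP q ≤ l.countP p) : ∀ a ∈ l, q a → p a := by
  induction l with
  | nil => simp
  | cons b l ih =>
    simp only [mem_cons, forall_eq_or_imp, countP_cons] at hpq hqp ⊢
    have hmono := countP_mono_left hpq.2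
    have hb : (if p b then 1 else 0) ≤ (if q b then 1 else 0) := by
      split_ifs <;> simp_all
    refine ⟨fun hq => ?_, ih hpq.2 (by omega)⟩
    by_contra hp
    simp only [hq, hp, if_true, if_false] at hqp
    omega

end List

theorem Finset.two_mul_card_le_card_of_exists_ne {β γ : Type*} {s : Finset β} {t : Finset γ}
    (f : β → γ) (h : ∀ c ∈ t, ∃ a ∈ s, ∃ b ∈ s, a ≠ b ∧ f a = c ∧ f b = c) :
    2 * #t ≤ #s := by
  classical
  calc 2 * #t ≤ #{a ∈ s | f a ∈ t} := by
        refine mul_card_image_le_card_of_maps_to (fun a ha => (mem_filter.1 ha).2) 2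
          fun c hc => ?_
        obtain ⟨a, ha, b, hb, hab, rfl, hbc⟩ := h c hc
        exact one_lt_card.2 ⟨a, by simp [ha, hc], b, by simp [hb, hbc, hc], hab⟩
    _ ≤ #s := card_filter_le _ _

theorem two_mul_card_add_two_mul_card_le_ncard {α : Type*} {E : α → α → Prop}
    (hfin : {e : α × α | E e.1 e.2}.Finite) {I A B : Finset α} (hAI : Disjoint A I)
    (hA : ∀ x ∈ A, ∃ w w', w ≠ w' ∧ E w x ∧ E w' x)
    (hB : ∀ v ∈ B, ∃ y y', y ≠ y' ∧ y ∈ I ∧ y' ∈ I ∧ E v y ∧ E v y') :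
    2 * #A + 2 * #B ≤ {e : α × α | E e.1 e.2}.ncard := by
  classical
  set F := hfin.toFinset
  have hmem : ∀ {x y}, E x y → (x, y) ∈ F := by simp [F]
  have hinto : 2 * #A ≤ #{e ∈ F | e.2 ∉ I} := by
    refine two_mul_card_le_card_of_exists_ne Prod.snd fun x hx => ?_
    obtain ⟨w, w', hww', hw, hw'⟩ := hA x hx
    have hxI := disjoint_left.1 hAI hx
    exact ⟨_, mem_filter.2 ⟨hmem hw, hxI⟩, _, mem_filter.2 ⟨hmem hw', hxI⟩,
      by simpa using hww', rfl, rfl⟩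
  have hfrom : 2 * #B ≤ #{e ∈ F | e.2 ∈ I} := by
    refine two_mul_card_le_card_of_exists_ne Prod.fst fun v hv => ?_
    obtain ⟨y, y', hyy', hy, hy', hvy, hvy'⟩ := hB v hv
    exact ⟨_, mem_filter.2 ⟨hmem hvy, hy⟩, _, mem_filter.2 ⟨hmem hvy', hy'⟩,
      by simpa using hyy', rfl, rfl⟩
  calc 2 * #A + 2 * #B ≤ #{e ∈ F | e.2 ∈ I} + #{e ∈ F | e.2 ∉ I} := by omega
    _ = {e : α × α | E e.1 e.2}.ncard := by
      rw [card_filter_add_card_filter_not, Set.ncard_eq_toFinset_card _ hfin]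

section

variable {α : Type*} {E : α → α → Prop} {V : Finset α} {p : List α}

namespace IsHamPathOn

variable {u v : α}

theorem adj (hp : IsHamPathOn E V u v p) {x y : α} (hxy : (x, y) ∈ p.consecutivePairs) :
    E x y :=
  List.IsChain.rel_of_mem_consecutivePairs hp.2.1 hxy

theorem isPathOn_of_infix (hp : IsHamPathOn E V u v p) {q : List α} (hq : q <:+: p)
    (hne : q ≠ []) : IsPathOn E V q :=
  ⟨hne, hp.1.sublist hq.sublist, List.IsChain.infix hp.2.1 hq,
    fun x hx => (hp.2.2.2.2 x).1 (hq.subset hx)⟩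

variable [DecidableEq α]

theorem toFinset_eq (hp : IsHamPathOn E V u v p) : p.toFinset = V := by
  ext x
  simp [hp.2.2.2.2 x]

theorem length_eq (hp : IsHamPathOn E V u v p) : p.length = #V := by
  rw [← hp.toFinset_eq, List.toFinset_card_of_nodup hp.1]

theorem countP_mem (hp : IsHamPathOn E V u v p) {S : Finset α} (hS : S ⊆ V) :
    p.countP (· ∈ S) = #S := by
  rw [List.countP_eq_length_filter, ← List.toFinset_card_of_nodup (hp.1.filter _),
    List.toFinset_filter, hp.toFinset_eq]
  simp only [decide_eq_true_eq, filter_mem_eq_inter, inter_eq_right.2 hS]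

end IsHamPathOn

variable [DecidableEq α] {k : ℕ} {inc out : Fin k → α} {j m : Fin k}

theorem SingleVisit.false_of_append (hsv : SingleVisit E V inc out) {a b : Fin k}
    {l₁ l₂ : List α} (hp : IsHamPathOn E V (inc j) (out m) (l₁ ++ l₂))
    (h₁ : l₁.getLast? = some (out a)) (h₂ : l₂.head? = some (inc b)) : False := by
  have hne₁ : l₁ ≠ [] := by rintro rfl; simp at h₁
  have hne₂ : l₂ ≠ [] := by rintro rfl; simp at h₂
  have hdisj : ∀ x ∈ l₁, x ∉ l₂ := fun x hx₁ hx₂ =>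
    (List.nodup_append.1 hp.1).2.2 x hx₁ x hx₂ rfl
  have hne : l₁ ≠ l₂ := fun h =>
    hdisj _ (List.head_mem hne₁) (h ▸ List.head_mem hne₁)
  refine hsv ⟨{l₁, l₂}, by rw [card_pair hne], ?_, ?_, ?_⟩
  · simp only [mem_insert, mem_singleton, forall_eq_or_imp, forall_eq]
    refine ⟨⟨hp.isPathOn_of_infix List.infix_append_left hne₁, ⟨j, ?_⟩, ⟨a, h₁⟩⟩,
      ⟨hp.isPathOn_of_infix List.infix_append_right hne₂, ⟨b, h₂⟩, ⟨m, ?_⟩⟩⟩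
    · rw [← List.head?_append_of_ne_nil l₁ (l₂ := l₂) hne₁, hp.2.2.1]
    · rw [← List.getLast?_append_of_ne_nil l₁ hne₂, hp.2.2.2.1]
  · simp only [mem_insert, mem_singleton]
    rintro q (rfl | rfl) r (rfl | rfl) hqr x hx
    exacts [absurd rfl hqr, hdisj x hx, fun hx₁ => hdisj x hx₁ hx, absurd rfl hqr]
  · intro x hx
    rcases List.mem_append.1 ((hp.2.2.2.2 x).2 hx) with hx | hx
    · exact ⟨l₁, by simp, hx⟩
    · exact ⟨l₂, by simp, hx⟩

theorem SingleVisit.notMem_consecutivePairs (hsv : SingleVisit E V inc out)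
    (hp : IsHamPathOn E V (inc j) (out m) p) (a b : Fin k) :
    (out a, inc b) ∉ p.consecutivePairs := by
  intro hab
  obtain ⟨s, t, rfl⟩ := List.mem_consecutivePairs_iff.1 hab
  exact hsv.false_of_append (a := a) (l₁ := s ++ [out a]) (l₂ := inc b :: t)
    (by simpa using hp) (by simp) rfl

namespace IsInOutGraph

theorem image_inc_subset (h : IsInOutGraph E V inc out) : univ.image inc ⊆ V := by
  simpa [image_subset_iff] using h.inc_mem

theorem image_out_subset (h : IsInOutGraph E V inc out) : univ.image out ⊆ V := by
  simpa [image_subset_iff] using h.out_mem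

theorem card_image_inc (h : IsInOutGraph E V inc out) : #(univ.image inc) = k := by
  rw [card_image_of_injective _ h.inc_inj, card_univ, Fintype.card_fin]

theorem card_image_out (h : IsInOutGraph E V inc out) : #(univ.image out) = k := by
  rw [card_image_of_injective _ h.out_inj, card_univ, Fintype.card_fin]

theorem succ_mem_image_inc (h : IsInOutGraph E V inc out) (hcard : #V = 2 * k - 1)
    (hp : IsHamPathOn E V (inc j) (out m) p) {x y : α} (hxy : (x, y) ∈ p.consecutivePairs)
    (hx : x ∉ univ.image out) : y ∈ univ.image inc := by
  have hOI : ∀ e ∈ p.consecutivePairs, e.2 ∈ univ.image inc → e.1 ∉ univ.image out := by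
    rintro ⟨x, y⟩ he hy hx
    obtain ⟨b, -, rfl⟩ := mem_image.1 hy
    obtain ⟨a, -, rfl⟩ := mem_image.1 hx
    exact h.single_visit.notMem_consecutivePairs hp a b he
  obtain ⟨t, rfl⟩ := List.head?_eq_some_iff.1 hp.2.2.1
  have hO : (inc j :: t).countP (· ∉ univ.image out) = k - 1 := by
    have := List.length_eq_countP_add_countP (· ∈ univ.image out) (l := inc j :: t)
    rw [hp.length_eq, hp.countP_mem h.image_out_subset, h.card_image_out, hcard] at this
    simp only [decide_eq_true_eq, decide_not] at this ⊢
    omega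
  have hI : t.countP (· ∈ univ.image inc) = k - 1 := by
    have := hp.countP_mem h.image_inc_subset
    rw [List.countP_cons, h.card_image_inc, if_pos (by simp)] at this
    omega
  have hcount : (inc j :: t).consecutivePairs.countP (fun e => e.1 ∉ univ.image out) ≤
      (inc j :: t).consecutivePairs.countP (fun e => e.2 ∈ univ.image inc) :=
    calc _ ≤ (inc j :: t).countP (· ∉ univ.image out) := List.countP_consecutivePairs_fst_le _
      _ = t.countP (· ∈ univ.image inc) := hO.trans hI.symm
      _ = _ := (List.countP_consecutivePairs_snd (l := inc j :: t) _).symm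
  simpa using
    List.imp_of_countP_le_of_imp (by simpa using hOI) hcount (x, y) hxy (by simpa using hx)

theorem exists_pred_eq_out (h : IsInOutGraph E V inc out) (hcard : #V = 2 * k - 1)
    (hp : IsHamPathOn E V (inc j) (out m) p) {x : α} (hx : x ∈ V)
    (hxI : x ∉ univ.image inc) : ∃ a, (out a, x) ∈ p.consecutivePairs := by
  have hne : p.head? ≠ some x := by
    rw [hp.2.2.1]
    rintro ⟨⟩
    exact hxI (mem_image_of_mem _ (mem_univ j))
  obtain ⟨w, hw⟩ := List.exists_mem_consecutivePairs_of_ne_head? ((hp.2.2.2.2 x).2 hx) hne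
  by_cases hwO : w ∈ univ.image out
  · obtain ⟨a, -, rfl⟩ := mem_image.1 hwO
    exact ⟨a, hw⟩
  · exact absurd (h.succ_mem_image_inc hcard hp hw hwO) hxI

theorem exists_succ_eq_inc (h : IsInOutGraph E V inc out) (hcard : #V = 2 * k - 1)
    (hp : IsHamPathOn E V (inc j) (out m) p) {v : α} (hv : v ∈ V)
    (hvO : v ∉ univ.image out) : ∃ b, (v, inc b) ∈ p.consecutivePairs := by
  have hne : p.getLast? ≠ some v := by
    rw [hp.2.2.2.1]
    rintro ⟨⟩
    exact hvO (mem_image_of_mem _ (mem_univ m))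
  obtain ⟨y, hy⟩ := List.exists_mem_consecutivePairs_of_ne_getLast? ((hp.2.2.2.2 v).2 hv) hne
  obtain ⟨b, -, rfl⟩ := mem_image.1 (h.succ_mem_image_inc hcard hp hy hvO)
  exact ⟨b, hy⟩

theorem exists_ne_out_adj (h : IsInOutGraph E V inc out) (hk : 1 ≤ k) (hcard : #V = 2 * k - 1)
    {x : α} (hx : x ∈ V) (hxI : x ∉ univ.image inc) :
    ∃ a a', a ≠ a' ∧ E (out a) x ∧ E (out a') x := by
  obtain ⟨p, hp⟩ := (h.paired ⟨0, hk⟩ ⟨0, hk⟩).2 rfl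
  obtain ⟨a, ha⟩ := h.exists_pred_eq_out hcard hp hx hxI
  obtain ⟨q, hq⟩ := (h.paired a a).2 rfl
  obtain ⟨a', ha'⟩ := h.exists_pred_eq_out hcard hq hx hxI
  refine ⟨a, a', ?_, hp.adj ha, hq.adj ha'⟩
  rintro rfl
  exact hq.1.getLast?_ne_of_mem_consecutivePairs ha' hq.2.2.2.1

theorem exists_ne_adj_inc (h : IsInOutGraph E V inc out) (hk : 1 ≤ k) (hcard : #V = 2 * k - 1)
    {v : α} (hv : v ∈ V) (hvO : v ∉ univ.image out) :
    ∃ b b', b ≠ b' ∧ E v (inc b) ∧ E v (inc b') := by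
  obtain ⟨p, hp⟩ := (h.paired ⟨0, hk⟩ ⟨0, hk⟩).2 rfl
  obtain ⟨b, hb⟩ := h.exists_succ_eq_inc hcard hp hv hvO
  obtain ⟨q, hq⟩ := (h.paired b b).2 rfl
  obtain ⟨b', hb'⟩ := h.exists_succ_eq_inc hcard hq hv hvO
  refine ⟨b, b', ?_, hp.adj hb, hq.adj hb'⟩
  rintro rfl
  exact hq.1.head?_ne_of_mem_consecutivePairs hb' hq.2.2.1

end IsInOutGraph

end

/-- every `k`-in-out graph (with `k ≥ 1`) having exactly `2k - 1` vertices
has at least `4k - 4` directed edges. -/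
theorem inOut_edges_lower_bound {α : Type*} [DecidableEq α] {k : ℕ} (hk : 1 ≤ k)
    (E : α → α → Prop) (Vset : Finset α) (inc out : Fin k → α)
    (h : IsInOutGraph E Vset inc out) (hcard : Vset.card = 2 * k - 1) :
    4 * k - 4 ≤ {e : α × α | E e.1 e.2}.ncard := by
  have hfin : {e : α × α | E e.1 e.2}.Finite :=
    (Vset ×ˢ Vset).finite_toSet.subset fun e he => by simpa using h.edge_mem e.1 e.2 he
  have hI : #(Vset \ univ.image inc) = k - 1 := by
    rw [card_sdiff_of_subset h.image_inc_subset, h.card_image_inc]; omega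
  have hO : #(Vset \ univ.image out) = k - 1 := by
    rw [card_sdiff_of_subset h.image_out_subset, h.card_image_out]; omega
  have hle : 2 * #(Vset \ univ.image inc) + 2 * #(Vset \ univ.image out) ≤
      {e : α × α | E e.1 e.2}.ncard := by
    refine two_mul_card_add_two_mul_card_le_ncard hfin sdiff_disjoint (fun x hx => ?_)
      (fun v hv => ?_)
    · obtain ⟨hxV, hxI⟩ := mem_sdiff.1 hx
      obtain ⟨a, a', haa', ha, ha'⟩ := h.exists_ne_out_adj hk hcard hxV hxI
      exact ⟨out a, out a', h.out_inj.ne haa', ha, ha'⟩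
    · obtain ⟨hvV, hvO⟩ := mem_sdiff.1 hv
      obtain ⟨b, b', hbb', hb, hb'⟩ := h.exists_ne_adj_inc hk hcard hvV hvO
      exact ⟨inc b, inc b', h.inc_inj.ne hbb', by simp, by simp, hb, hb'⟩
  omega
end

section
/- For every odd integer k ≥ 5 and all j, m ∈ {1,…,k} with j ≠ m, there is no Hamiltonian path in the digraph S_k from the incoming vertex i_j to the outgoing vertex o_m. -/
/-- The directed edge set of the graph `S_k` for odd `k ≥ 5`. -/
def oddEdges (k : ℕ) : Finset (ℕ × ℕ) :=
  ((Finset.Icc 1 ((k - 1) / 2)).biUnion fun i =>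
      {(4*i-2, 4*i-1), (4*i-1, 4*i-2), (4*i-1, 4*i), (4*i, 4*i-1),
        (4*i, 4*i+1), (4*i+1, 4*i)}) ∪
  ((Finset.Icc 1 ((k - 3) / 2)).biUnion fun i => {(4*i-2, 4*i+5), (4*i+1, 4*i+2)}) ∪
  ({(1, 2), (2*k-4, 1), (2*k-2, 5)} : Finset (ℕ × ℕ))

/-- The `m`-th outgoing vertex `o_m` (with `1 ≤ m ≤ k`) of `S_k` for odd `k ≥ 5`:
`o_1 = 2k-1`, `o_{k-1} = 3`, `o_k = 2k-5`, and otherwise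
`o_{2j} = 4j+3` and `o_{2j+1} = 4j-3`. -/
def oddOut (k m : ℕ) : ℕ :=
  if m = 1 then 2*k - 1
  else if m = k - 1 then 3
  else if m = k then 2*k - 5
  else if Even m then 2*m + 3
  else 2*m - 5


/-!
Write `k = 2B + 1`. Besides the vertex `1`, the vertices of `S_k` form `B` blocks; block `i` is the
bidirected path `aᵢ bᵢ cᵢ dᵢ = 4i-2, 4i-1, 4i, 4i+1`, and `1` plays the part of `d₀`. The only
other edges are the links `dᵢ₋₁ → aᵢ` and `aᵢ₋₁ → dᵢ` between consecutive blocks, `a_B → d₀`, and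
`c_B → d₁`. The incoming and outgoing vertices are the odd ones, i.e. the `bᵢ` and `dᵢ`.

Since `bᵢ` and `cᵢ` have no other neighbours, a Hamiltonian path runs through a block that
contains neither of its ends either as `aᵢ bᵢ cᵢ dᵢ`, entered by `dᵢ₋₁ → aᵢ` and left by
`dᵢ → aᵢ₊₁`, or as `dᵢ cᵢ bᵢ aᵢ`, entered by the link into `dᵢ` and left by `aᵢ → dᵢ₊₁`. So the
direction is constant along every run of blocks free of ends, and the path can only change it
inside the (at most two) blocks containing its ends. A local analysis of those blocks shows that
the directions fit together around the cycle of blocks only when the end is `o_j` for the start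
`i_j`.
-/

variable {α : Type*}

namespace List

def Follows (p : List α) (x y : α) : Prop := ∃ n, p[n]? = some x ∧ p[n + 1]? = some y

variable {p : List α} {x x' y y' : α}

theorem Follows.of_eq (h : p.Follows x y) (hx : x = x') (hy : y = y') : p.Follows x' y' :=
  hx ▸ hy ▸ h

theorem Nodup.eq_of_getElem?_eq_some (hp : p.Nodup) {m n : ℕ} (hm : p[m]? = some x)
    (hn : p[n]? = some x) : m = n :=
  (getElem?_inj (getElem?_eq_some_iff.mp hm).1 hp).mp (hm.trans hn.symm)

theorem Nodup.follows_right_unique (hp : p.Nodup) (h : p.Follows x y) (h' : p.Follows x y') :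
    y = y' := by
  obtain ⟨m, hx, hy⟩ := h
  obtain ⟨n, hx', hy'⟩ := h'
  cases hp.eq_of_getElem?_eq_some hx hx'
  simpa [hy] using hy'

theorem Nodup.follows_left_unique (hp : p.Nodup) (h : p.Follows x y) (h' : p.Follows x' y) :
    x = x' := by
  obtain ⟨m, hx, hy⟩ := h
  obtain ⟨n, hx', hy'⟩ := h'
  cases Nat.succ_injective (hp.eq_of_getElem?_eq_some hy hy')
  simpa [hx] using hx'

theorem Nodup.follows_asymm (hp : p.Nodup) (h : p.Follows x y) : ¬p.Follows y x := by
  rintro ⟨n, hy, hx⟩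
  obtain ⟨m, hx', hy'⟩ := h
  have := hp.eq_of_getElem?_eq_some hx hx'
  have := hp.eq_of_getElem?_eq_some hy hy'
  omega

end List

namespace IsHamPathOn

variable {E : α → α → Prop} {V : Finset α} {u v x y w : α} {p : List α}

theorem rel_of_follows (hp : IsHamPathOn E V u v p) (h : p.Follows x y) : E x y := by
  obtain ⟨n, hx, hy⟩ := h
  obtain ⟨hn, rfl⟩ := List.getElem?_eq_some_iff.mp hy
  obtain ⟨_, rfl⟩ := List.getElem?_eq_some_iff.mp hx
  exact List.isChain_iff_getElem.mp hp.2.1 n hn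

theorem getElem?_zero (hp : IsHamPathOn E V u v p) : p[0]? = some u :=
  List.head?_eq_getElem? ▸ hp.2.2.1

theorem getElem?_length_sub_one (hp : IsHamPathOn E V u v p) : p[p.length - 1]? = some v :=
  List.getLast?_eq_getElem? ▸ hp.2.2.2.1

theorem start_mem (hp : IsHamPathOn E V u v p) : u ∈ V :=
  (hp.2.2.2.2 u).mp (List.mem_of_getElem? hp.getElem?_zero)

theorem end_mem (hp : IsHamPathOn E V u v p) : v ∈ V :=
  (hp.2.2.2.2 v).mp (List.mem_of_getElem? hp.getElem?_length_sub_one)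

theorem exists_succ (hp : IsHamPathOn E V u v p) (hx : x ∈ V) (hxv : x ≠ v) :
    ∃ y, p.Follows x y := by
  obtain ⟨n, hn⟩ := List.mem_iff_getElem?.mp ((hp.2.2.2.2 x).mpr hx)
  have hlt := (List.getElem?_eq_some_iff.mp hn).1
  have hlast : n ≠ p.length - 1 := by
    rintro rfl
    exact hxv (Option.some_injective _ (hn.symm.trans hp.getElem?_length_sub_one))
  exact ⟨p[n + 1], n, hn, List.getElem?_eq_getElem (by omega)⟩

theorem exists_pred (hp : IsHamPathOn E V u v p) (hx : x ∈ V) (hxu : x ≠ u) :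
    ∃ y, p.Follows y x := by
  obtain ⟨n, hn⟩ := List.mem_iff_getElem?.mp ((hp.2.2.2.2 x).mpr hx)
  have hlt := (List.getElem?_eq_some_iff.mp hn).1
  cases n with
  | zero => exact absurd (Option.some_injective _ (hn.symm.trans hp.getElem?_zero)) hxu
  | succ n => exact ⟨p[n], n, List.getElem?_eq_getElem (by omega), hn⟩

theorem not_follows_start (hp : IsHamPathOn E V u v p) : ¬p.Follows x u := by
  rintro ⟨n, -, hu⟩
  have := hp.1.eq_of_getElem?_eq_some hu hp.getElem?_zero
  omega

theorem not_follows_end (hp : IsHamPathOn E V u v p) : ¬p.Follows v y := by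
  rintro ⟨n, hv, hy⟩
  have := hp.1.eq_of_getElem?_eq_some hv hp.getElem?_length_sub_one
  have := (List.getElem?_eq_some_iff.mp hy).1
  omega

theorem eq_of_follows_follows (hp : IsHamPathOn E V u v p) (huw : p.Follows u w)
    (hwv : p.Follows w v) (hx : x ∈ V) : x = u ∨ x = w ∨ x = v := by
  obtain ⟨m, hu, hw⟩ := huw
  obtain ⟨n, hw', hv⟩ := hwv
  obtain rfl := hp.1.eq_of_getElem?_eq_some hu hp.getElem?_zero
  obtain rfl := hp.1.eq_of_getElem?_eq_some hw hw'
  have hlen := hp.1.eq_of_getElem?_eq_some hv hp.getElem?_length_sub_one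
  obtain ⟨k, hk⟩ := List.mem_iff_getElem?.mp ((hp.2.2.2.2 x).mpr hx)
  have := (List.getElem?_eq_some_iff.mp hk).1
  obtain rfl | rfl | rfl : k = 0 ∨ k = 1 ∨ k = 2 := by omega
  · exact .inl (Option.some_injective _ (hk.symm.trans hu))
  · exact .inr (.inl (Option.some_injective _ (hk.symm.trans hw)))
  · exact .inr (.inr (Option.some_injective _ (hk.symm.trans hv)))

theorem start_ne_end (hp : IsHamPathOn E V u v p) (hx : x ∈ V) (hy : y ∈ V) (hxy : x ≠ y) :
    u ≠ v := by
  rintro rfl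
  have hlen := hp.1.eq_of_getElem?_eq_some hp.getElem?_zero hp.getElem?_length_sub_one
  have hV : ∀ z ∈ V, z = u := fun z hz => by
    obtain ⟨n, hn⟩ := List.mem_iff_getElem?.mp ((hp.2.2.2.2 z).mpr hz)
    have := (List.getElem?_eq_some_iff.mp hn).1
    obtain rfl : n = 0 := by omega
    exact Option.some_injective _ (hn.symm.trans hp.getElem?_zero)
  exact hxy ((hV x hx).trans (hV y hy).symm)

end IsHamPathOn

def SkEdge (B x y : ℕ) : Prop :=
  (∃ i, 1 ≤ i ∧ i ≤ B ∧ ((x = 4*i-2 ∧ y = 4*i-1) ∨ (x = 4*i-1 ∧ y = 4*i-2) ∨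
    (x = 4*i-1 ∧ y = 4*i) ∨ (x = 4*i ∧ y = 4*i-1) ∨ (x = 4*i ∧ y = 4*i+1) ∨
    (x = 4*i+1 ∧ y = 4*i))) ∨
  (∃ i, 1 ≤ i ∧ i ≤ B - 1 ∧ ((x = 4*i-2 ∧ y = 4*i+5) ∨ (x = 4*i+1 ∧ y = 4*i+2))) ∨
  (x = 1 ∧ y = 2) ∨ (x = 4*B-2 ∧ y = 1) ∨ (x = 4*B ∧ y = 5)

theorem mem_oddEdges_iff {B x y : ℕ} : (x, y) ∈ oddEdges (2 * B + 1) ↔ SkEdge B x y := by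
  simp only [oddEdges, SkEdge, show (2*B+1-1)/2 = B by omega, show (2*B+1-3)/2 = B-1 by omega,
    show 2*(2*B+1)-4 = 4*B-2 by omega, show 2*(2*B+1)-2 = 4*B by omega, Finset.mem_union,
    Finset.mem_biUnion, Finset.mem_Icc, Finset.mem_insert, Finset.mem_singleton, Prod.mk.injEq,
    or_assoc, and_assoc]

structure IsOddSkHamPath (B u v : ℕ) (p : List ℕ) : Prop where
  two_le : 2 ≤ B
  odd_start : u % 2 = 1
  odd_end : v % 2 = 1
  isHamPathOn : IsHamPathOn (SkEdge B) (Finset.Icc 1 (4 * B + 1)) u v p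

/- `EntersLow p i` and `EntersHigh B p i`: the path crosses into block `i` from below at `aᵢ`
(by `dᵢ₋₁ → aᵢ`), resp. at `dᵢ` (by `aᵢ₋₁ → dᵢ`, or by `c_B → d₁` when `i = 1`). The index
`B + 1` stands for `d₀ = 1`, which can only be entered by `a_B → d₀`. -/
def EntersLow (p : List ℕ) (i : ℕ) : Prop := p.Follows (4 * i - 3) (4 * i - 2)

def EntersHigh (B : ℕ) (p : List ℕ) (i : ℕ) : Prop :=
  (i = 1 ∧ p.Follows (4 * B) 5) ∨
    (2 ≤ i ∧ i ≤ B ∧ p.Follows (4 * i - 6) (4 * i + 1)) ∨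
    (i = B + 1 ∧ p.Follows (4 * B - 2) 1)

def Ascending (B : ℕ) (p : List ℕ) (i : ℕ) : Prop := EntersLow p i ∧ ¬EntersHigh B p i

def Descending (B : ℕ) (p : List ℕ) (i : ℕ) : Prop := ¬EntersLow p i ∧ EntersHigh B p i

namespace IsOddSkHamPath

variable {B u v i x y : ℕ} {p : List ℕ}

theorem skEdge (h : IsOddSkHamPath B u v p) (hxy : p.Follows x y) : SkEdge B x y :=
  h.isHamPathOn.rel_of_follows hxy

theorem exists_succ (h : IsOddSkHamPath B u v p) (h1 : 1 ≤ x) (hx : x ≤ 4 * B + 1)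
    (hxv : x ≠ v) : ∃ y, p.Follows x y :=
  h.isHamPathOn.exists_succ (Finset.mem_Icc.mpr ⟨h1, hx⟩) hxv

theorem exists_pred (h : IsOddSkHamPath B u v p) (h1 : 1 ≤ x) (hx : x ≤ 4 * B + 1)
    (hxu : x ≠ u) : ∃ y, p.Follows y x :=
  h.isHamPathOn.exists_pred (Finset.mem_Icc.mpr ⟨h1, hx⟩) hxu

theorem right_unique (h : IsOddSkHamPath B u v p) {y' : ℕ} (hy : p.Follows x y)
    (hy' : p.Follows x y') : y = y' :=
  h.isHamPathOn.1.follows_right_unique hy hy'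

theorem left_unique (h : IsOddSkHamPath B u v p) {x' : ℕ} (hx : p.Follows x y)
    (hx' : p.Follows x' y) : x = x' :=
  h.isHamPathOn.1.follows_left_unique hx hx'

theorem follows_asymm (h : IsOddSkHamPath B u v p) (hxy : p.Follows x y) : ¬p.Follows y x :=
  h.isHamPathOn.1.follows_asymm hxy

theorem eq_of_follows_follows (h : IsOddSkHamPath B u v p) {w : ℕ} (huw : p.Follows u w)
    (hwv : p.Follows w v) (hx : 1 ≤ x) (hxB : x ≤ 4 * B + 1) : x = u ∨ x = w ∨ x = v :=
  h.isHamPathOn.eq_of_follows_follows huw hwv (Finset.mem_Icc.mpr ⟨hx, hxB⟩)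

theorem start_bounds (h : IsOddSkHamPath B u v p) : 1 ≤ u ∧ u ≤ 4 * B + 1 :=
  Finset.mem_Icc.mp h.isHamPathOn.start_mem

theorem end_bounds (h : IsOddSkHamPath B u v p) : 1 ≤ v ∧ v ≤ 4 * B + 1 :=
  Finset.mem_Icc.mp h.isHamPathOn.end_mem

theorem start_ne_end (h : IsOddSkHamPath B u v p) : u ≠ v :=
  h.isHamPathOn.start_ne_end (x := 1) (y := 2) (by simp) (by simp; have := h.two_le; omega)
    (by omega)

theorem entersHigh_one_iff (h : IsOddSkHamPath B u v p) :
    EntersHigh B p 1 ↔ p.Follows (4*B) 5 := by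
  have := h.two_le
  refine ⟨?_, fun h' => .inl ⟨rfl, h'⟩⟩
  rintro (⟨_, h'⟩ | ⟨_, _, _⟩ | ⟨_, _⟩)
  exacts [h', by omega, by omega]

theorem entersHigh_last_iff (h : IsOddSkHamPath B u v p) :
    EntersHigh B p (B + 1) ↔ p.Follows (4*B-2) 1 := by
  have := h.two_le
  refine ⟨?_, fun h' => .inr (.inr ⟨rfl, h'⟩)⟩
  rintro (⟨_, _⟩ | ⟨_, _, _⟩ | ⟨_, h'⟩)
  exacts [by omega, by omega, h']

theorem pred_a (h : IsOddSkHamPath B u v p) (hi : 1 ≤ i) (hiB : i ≤ B) :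
    p.Follows (4*i-1) (4*i-2) ∨ EntersLow p i := by
  have := h.odd_start
  obtain ⟨x, hx⟩ := h.exists_pred (x := 4*i-2) (by omega) (by omega) (by omega)
  obtain rfl | rfl : x = 4*i-1 ∨ x = 4*i-3 := by
    rcases h.skEdge hx with ⟨j, _⟩ | ⟨j, _⟩ | _ | _ | _ <;> omega
  exacts [.inl hx, .inr hx]

theorem succ_a (h : IsOddSkHamPath B u v p) (hi : 1 ≤ i) (hiB : i ≤ B) :
    p.Follows (4*i-2) (4*i-1) ∨ EntersHigh B p (i + 1) := by
  have := h.odd_end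
  obtain ⟨y, hy⟩ := h.exists_succ (x := 4*i-2) (by omega) (by omega) (by omega)
  obtain rfl | ⟨hiB', rfl⟩ | ⟨rfl, rfl⟩ : y = 4*i-1 ∨ (i < B ∧ y = 4*i+5) ∨ (i = B ∧ y = 1) := by
    rcases h.skEdge hy with ⟨j, _⟩ | ⟨j, _⟩ | _ | _ | _ <;> omega
  · exact .inl hy
  · exact .inr (.inr (.inl ⟨by omega, by omega, hy.of_eq (by omega) (by omega)⟩))
  · exact .inr (.inr (.inr ⟨rfl, hy⟩))

theorem pred_b (h : IsOddSkHamPath B u v p) (hi : 1 ≤ i) (hiB : i ≤ B) (hu : 4*i-1 ≠ u) :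
    p.Follows (4*i-2) (4*i-1) ∨ p.Follows (4*i) (4*i-1) := by
  obtain ⟨x, hx⟩ := h.exists_pred (x := 4*i-1) (by omega) (by omega) hu
  obtain rfl | rfl : x = 4*i-2 ∨ x = 4*i := by
    rcases h.skEdge hx with ⟨j, _⟩ | ⟨j, _⟩ | _ | _ | _ <;> omega
  exacts [.inl hx, .inr hx]

theorem succ_b (h : IsOddSkHamPath B u v p) (hi : 1 ≤ i) (hiB : i ≤ B) (hv : 4*i-1 ≠ v) :
    p.Follows (4*i-1) (4*i-2) ∨ p.Follows (4*i-1) (4*i) := by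
  obtain ⟨y, hy⟩ := h.exists_succ (x := 4*i-1) (by omega) (by omega) hv
  obtain rfl | rfl : y = 4*i-2 ∨ y = 4*i := by
    rcases h.skEdge hy with ⟨j, _⟩ | ⟨j, _⟩ | _ | _ | _ <;> omega
  exacts [.inl hy, .inr hy]

theorem pred_c (h : IsOddSkHamPath B u v p) (hi : 1 ≤ i) (hiB : i ≤ B) :
    p.Follows (4*i-1) (4*i) ∨ p.Follows (4*i+1) (4*i) := by
  have := h.odd_start
  obtain ⟨x, hx⟩ := h.exists_pred (x := 4*i) (by omega) (by omega) (by omega)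
  obtain rfl | rfl : x = 4*i-1 ∨ x = 4*i+1 := by
    rcases h.skEdge hx with ⟨j, _⟩ | ⟨j, _⟩ | _ | _ | _ <;> omega
  exacts [.inl hx, .inr hx]

theorem succ_c (h : IsOddSkHamPath B u v p) (hi : 1 ≤ i) (hiB : i ≤ B) :
    p.Follows (4*i) (4*i-1) ∨ p.Follows (4*i) (4*i+1) ∨ (i = B ∧ EntersHigh B p 1) := by
  have := h.odd_end
  obtain ⟨y, hy⟩ := h.exists_succ (x := 4*i) (by omega) (by omega) (by omega)
  obtain rfl | rfl | ⟨rfl, rfl⟩ : y = 4*i-1 ∨ y = 4*i+1 ∨ (i = B ∧ y = 5) := by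
    rcases h.skEdge hy with ⟨j, _⟩ | ⟨j, _⟩ | _ | _ | _ <;> omega
  exacts [.inl hy, .inr (.inl hy), .inr (.inr ⟨rfl, .inl ⟨rfl, hy⟩⟩)]

theorem pred_d (h : IsOddSkHamPath B u v p) (hi : 1 ≤ i) (hiB : i ≤ B) (hu : 4*i+1 ≠ u) :
    p.Follows (4*i) (4*i+1) ∨ EntersHigh B p i := by
  have := h.two_le
  obtain ⟨x, hx⟩ := h.exists_pred (x := 4*i+1) (by omega) (by omega) hu
  obtain rfl | ⟨hi2, rfl⟩ | ⟨rfl, rfl⟩ : x = 4*i ∨ (2 ≤ i ∧ x = 4*i-6) ∨ (i = 1 ∧ x = 4*B) := by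
    rcases h.skEdge hx with ⟨j, _⟩ | ⟨j, _⟩ | _ | _ | _ <;> omega
  · exact .inl hx
  · exact .inr (.inr (.inl ⟨hi2, hiB, hx⟩))
  · exact .inr (.inl ⟨rfl, hx⟩)

theorem succ_d (h : IsOddSkHamPath B u v p) (hi : 1 ≤ i) (hiB : i ≤ B) (hv : 4*i+1 ≠ v) :
    p.Follows (4*i+1) (4*i) ∨ EntersLow p (i + 1) := by
  obtain ⟨y, hy⟩ := h.exists_succ (x := 4*i+1) (by omega) (by omega) hv
  obtain rfl | rfl : y = 4*i ∨ y = 4*i+2 := by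
    rcases h.skEdge hy with ⟨j, _⟩ | ⟨j, _⟩ | _ | _ | _ <;> omega
  · exact .inl hy
  · exact .inr (hy.of_eq (by omega) (by omega))

theorem entersLow_one (h : IsOddSkHamPath B u v p) (hv : v ≠ 1) : EntersLow p 1 := by
  obtain ⟨y, hy⟩ := h.exists_succ (x := 1) le_rfl (by omega) hv.symm
  obtain rfl : y = 2 := by
    rcases h.skEdge hy with ⟨j, _⟩ | ⟨j, _⟩ | _ | _ | _ <;> omega
  exact hy

theorem entersHigh_last (h : IsOddSkHamPath B u v p) (hu : u ≠ 1) : EntersHigh B p (B + 1) := by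
  obtain ⟨x, hx⟩ := h.exists_pred (x := 1) le_rfl (by omega) hu.symm
  obtain rfl : x = 4*B-2 := by
    rcases h.skEdge hx with ⟨j, _⟩ | ⟨j, _⟩ | _ | _ | _ <;> omega
  exact .inr (.inr ⟨rfl, hx⟩)

theorem not_entersLow_last (h : IsOddSkHamPath B u v p) : ¬EntersLow p (B + 1) := fun hy => by
  have := h.two_le
  rcases h.skEdge (x := 4*(B+1)-3) (y := 4*(B+1)-2) hy with ⟨j, _⟩ | ⟨j, _⟩ | _ | _ | _ <;> omega

theorem not_entersLow_of (h : IsOddSkHamPath B u v p) (hi : 1 ≤ i)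
    (hba : p.Follows (4*i-1) (4*i-2)) : ¬EntersLow p i := fun hlow => by
  have := h.left_unique hba hlow
  omega

theorem not_entersLow_succ_of (h : IsOddSkHamPath B u v p) (hdc : p.Follows (4*i+1) (4*i)) :
    ¬EntersLow p (i + 1) := fun hlow => by
  have := h.right_unique (y' := 4*i+2) hdc (hlow.of_eq (by omega) (by omega))
  omega

theorem not_entersHigh_of (h : IsOddSkHamPath B u v p) (hi : 1 ≤ i) (hiB : i ≤ B)
    (hcd : p.Follows (4*i) (4*i+1)) : ¬EntersHigh B p i := by
  have := h.two_le
  rintro (⟨rfl, hX⟩ | ⟨_, _, hx⟩ | ⟨rfl, _⟩)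
  · have := h.left_unique hcd hX
    omega
  · have := h.left_unique hcd hx
    omega
  · omega

theorem not_entersHigh_succ_of (h : IsOddSkHamPath B u v p) (hi : 1 ≤ i)
    (hab : p.Follows (4*i-2) (4*i-1)) : ¬EntersHigh B p (i + 1) := by
  rintro (⟨_, _⟩ | ⟨_, _, hy⟩ | ⟨_, hy⟩)
  · omega
  · have := h.right_unique (y' := 4*i+5) hab (hy.of_eq (by omega) (by omega))
    omega
  · have := h.right_unique hab (hy.of_eq (by omega) rfl)
    omega

theorem ne_start_of_entersHigh (h : IsOddSkHamPath B u v p) (hi : 1 ≤ i) (hiB : i ≤ B)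
    (hhigh : EntersHigh B p i) : 4*i+1 ≠ u := by
  rintro rfl
  rcases hhigh with ⟨rfl, hx⟩ | ⟨_, _, hx⟩ | ⟨rfl, _⟩
  exacts [h.isHamPathOn.not_follows_start hx, h.isHamPathOn.not_follows_start hx, by omega]

theorem ne_end_of_entersLow_succ (h : IsOddSkHamPath B u v p) (hlow : EntersLow p (i + 1)) :
    4*i+1 ≠ v := by
  rintro rfl
  exact h.isHamPathOn.not_follows_end (hlow.of_eq (by omega) rfl)

/- For odd `x`, `(x + 1) / 4` is the index of the block containing `x`, and `0` for `x = d₀`. -/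
theorem ascending_or_descending_of_clean (h : IsOddSkHamPath B u v p) (hi : 1 ≤ i) (hiB : i ≤ B)
    (hu : (u + 1) / 4 ≠ i) (hv : (v + 1) / 4 ≠ i) :
    Ascending B p i ∧ Ascending B p (i + 1) ∨ Descending B p i ∧ Descending B p (i + 1) := by
  have := h.odd_start; have := h.odd_end
  rcases h.succ_b hi hiB (by omega) with hba | hbc
  · have hcb := (h.pred_b hi hiB (by omega)).resolve_left (h.follows_asymm hba)
    have hdc := (h.pred_c hi hiB).resolve_left (h.follows_asymm hcb)
    refine .inr ⟨⟨h.not_entersLow_of hi hba, ?_⟩, h.not_entersLow_succ_of hdc, ?_⟩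
    · exact (h.pred_d hi hiB (by omega)).resolve_left (h.follows_asymm hdc)
    · exact (h.succ_a hi hiB).resolve_left (h.follows_asymm hba)
  · have hab := (h.pred_b hi hiB (by omega)).resolve_right (h.follows_asymm hbc)
    have hcd : p.Follows (4*i) (4*i+1) := by
      rcases h.succ_c hi hiB with hcb | hcd | ⟨rfl, -⟩
      · exact absurd hcb (h.follows_asymm hbc)
      · exact hcd
      · -- `c_B → d₁` would leave `d_B` only `c_B` as successor, which is already entered from `b_B`
        rcases h.succ_d hi hiB (by omega) with hdc | hlow
        · exact absurd (h.left_unique hdc hbc) (by omega)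
        · exact absurd hlow h.not_entersLow_last
    refine .inl ⟨⟨(h.pred_a hi hiB).resolve_left (h.follows_asymm hab),
      h.not_entersHigh_of hi hiB hcd⟩, ?_, h.not_entersHigh_succ_of hi hab⟩
    exact (h.succ_d hi hiB (by omega)).resolve_left (h.follows_asymm hcd)

theorem end_ne_b_of_start_eq_d (h : IsOddSkHamPath B u v p) (hi : 1 ≤ i) (hiB : i ≤ B)
    (hu : u = 4*i+1) : v ≠ 4*i-1 := by
  rintro rfl
  subst hu
  have hdc := (h.pred_c hi hiB).resolve_left fun hbc => h.isHamPathOn.not_follows_end hbc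
  rcases h.succ_c hi hiB with hcb | hcd | ⟨rfl, hX⟩
  · have := h.eq_of_follows_follows hdc hcb (x := 4*i-2) (by omega) (by omega)
    omega
  · exact h.follows_asymm hdc hcd
  · -- `c_B → d₁` forces `a_B → b_B`, so nothing enters `d₀`
    have := h.two_le
    have hab := (h.pred_b hi hiB (by omega)).resolve_right fun hcb =>
      absurd (h.right_unique hcb (h.entersHigh_one_iff.mp hX)) (by omega)
    exact h.not_entersHigh_succ_of hi hab (h.entersHigh_last (by omega))

theorem end_ne_d_of_start_eq_b (h : IsOddSkHamPath B u v p) (hi : 1 ≤ i) (hiB : i ≤ B)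
    (hu : u = 4*i-1) : v ≠ 4*i+1 := by
  rintro rfl
  subst hu
  have := h.two_le
  have hbc := (h.pred_c hi hiB).resolve_right fun hdc => h.isHamPathOn.not_follows_end hdc
  rcases h.succ_c hi hiB with hcb | hcd | ⟨rfl, hX⟩
  · exact h.follows_asymm hbc hcb
  · have := h.eq_of_follows_follows hbc hcd (x := 4*i-2) (by omega) (by omega)
    omega
  · -- `c_B → d₁` forces block `1` to be descending, so nothing leaves `d₀`
    rcases h.ascending_or_descending_of_clean le_rfl (by omega) (by omega) (by omega) with
      ⟨⟨-, hX'⟩, -⟩ | ⟨⟨hlow, -⟩, -⟩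
    · exact hX' hX
    · exact hlow (h.entersLow_one (by omega))

theorem boundary_of_start_eq_d (h : IsOddSkHamPath B u v p) (hi : 1 ≤ i) (hiB : i ≤ B)
    (hu : u = 4*i+1) : (¬EntersLow p i ∧ ¬EntersHigh B p i) ∧ Descending B p (i + 1) := by
  have hv := h.end_ne_b_of_start_eq_d hi hiB hu
  subst hu
  have huv := h.start_ne_end
  have hdc : p.Follows (4*i+1) (4*i) := by
    refine (h.succ_d hi hiB huv).resolve_right fun hlow => ?_
    have hbc := (h.pred_c hi hiB).resolve_right fun hdc =>
      absurd (h.right_unique (y' := 4*i+2) hdc (hlow.of_eq (by omega) (by omega))) (by omega)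
    rcases h.succ_c hi hiB with hcb | hcd | ⟨rfl, -⟩
    · exact h.follows_asymm hbc hcb
    · exact h.isHamPathOn.not_follows_start hcd
    · exact h.not_entersLow_last hlow
  have hcb : p.Follows (4*i) (4*i-1) := by
    rcases h.succ_c hi hiB with hcb | hcd | ⟨rfl, hX⟩
    · exact hcb
    · exact absurd hcd (h.follows_asymm hdc)
    · have hX := h.entersHigh_one_iff.mp hX
      have hab := (h.pred_b hi hiB (by omega)).resolve_right fun hcb =>
        absurd (h.right_unique hcb hX) (by omega)
      rcases h.succ_b hi hiB hv.symm with hba | hbc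
      · exact absurd hba (h.follows_asymm hab)
      · exact absurd (h.left_unique hbc hdc) (by omega)
  have hba := (h.succ_b hi hiB hv.symm).resolve_right (h.follows_asymm hcb)
  exact ⟨⟨h.not_entersLow_of hi hba, fun hhigh => h.ne_start_of_entersHigh hi hiB hhigh rfl⟩,
    h.not_entersLow_succ_of hdc, (h.succ_a hi hiB).resolve_left (h.follows_asymm hba)⟩

theorem boundary_of_start_eq_b (h : IsOddSkHamPath B u v p) (hi : 1 ≤ i) (hiB : i < B)
    (hu : u = 4*i-1) : EntersLow p i ∧ EntersLow p (i + 1) ∧ EntersHigh B p (i + 1) := by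
  have hv := h.end_ne_d_of_start_eq_b hi hiB.le hu
  subst hu
  have hcd : p.Follows (4*i) (4*i+1) := by
    rcases h.succ_c hi hiB.le with hcb | hcd | ⟨rfl, -⟩
    · exact absurd hcb h.isHamPathOn.not_follows_start
    · exact hcd
    · exact absurd hiB (lt_irrefl _)
  have hbc := (h.pred_c hi hiB.le).resolve_right (h.follows_asymm hcd)
  refine ⟨(h.pred_a hi hiB.le).resolve_left fun hba => ?_, ?_, ?_⟩
  · exact absurd (h.right_unique hba hbc) (by omega)
  · exact (h.succ_d hi hiB.le hv.symm).resolve_left (h.follows_asymm hcd)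
  · exact (h.succ_a hi hiB.le).resolve_left h.isHamPathOn.not_follows_start

theorem boundary_of_start_eq_b_last (h : IsOddSkHamPath B u v p) (hu : u = 4*B-1) :
    EntersHigh B p B ∧ p.Follows (4*B-1) (4*B-2) ∧ p.Follows (4*B-2) 1 := by
  have := h.two_le
  have hv := h.end_ne_d_of_start_eq_b (by omega) le_rfl hu
  subst hu
  have hdc := (h.succ_d (by omega) le_rfl hv.symm).resolve_right h.not_entersLow_last
  have hba := (h.succ_b (by omega) le_rfl h.start_ne_end).resolve_right fun hbc =>
    absurd (h.left_unique hbc hdc) (by omega)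
  refine ⟨(h.pred_d (by omega) le_rfl (by omega)).resolve_left (h.follows_asymm hdc), hba, ?_⟩
  exact h.entersHigh_last_iff.mp
    ((h.succ_a (by omega) le_rfl).resolve_left h.isHamPathOn.not_follows_start)

theorem boundary_of_end_eq_d (h : IsOddSkHamPath B u v p) (hi : 1 ≤ i) (hiB : i ≤ B)
    (hv : v = 4*i+1) : ¬EntersLow p (i + 1) ∧ ¬EntersHigh B p (i + 1) := by
  have hu : u ≠ 4*i-1 := fun hu => h.end_ne_d_of_start_eq_b hi hiB hu hv
  subst hv
  have hbc := (h.pred_c hi hiB).resolve_right fun hdc => h.isHamPathOn.not_follows_end hdc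
  have hab := (h.pred_b hi hiB hu.symm).resolve_right (h.follows_asymm hbc)
  exact ⟨fun hlow => h.ne_end_of_entersLow_succ hlow rfl, h.not_entersHigh_succ_of hi hab⟩

theorem boundary_of_end_eq_b (h : IsOddSkHamPath B u v p) (hi : 1 ≤ i) (hiB : i ≤ B)
    (hv : v = 4*i-1) : EntersHigh B p i ∧ (i < B → Descending B p (i + 1)) := by
  have hu : u ≠ 4*i+1 := fun hu => h.end_ne_b_of_start_eq_d hi hiB hu hv
  subst hv
  have hdc := (h.pred_c hi hiB).resolve_left fun hbc => h.isHamPathOn.not_follows_end hbc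
  refine ⟨(h.pred_d hi hiB hu.symm).resolve_left (h.follows_asymm hdc), fun hiB' => ?_⟩
  have hcb : p.Follows (4*i) (4*i-1) := by
    rcases h.succ_c hi hiB with hcb | hcd | ⟨rfl, -⟩
    · exact hcb
    · exact absurd hcd (h.follows_asymm hdc)
    · exact absurd hiB' (lt_irrefl _)
  refine ⟨h.not_entersLow_succ_of hdc, (h.succ_a hi hiB).resolve_left fun hab => ?_⟩
  exact absurd (h.left_unique hab hcb) (by omega)

theorem ascending_or_descending_of_clean_range (h : IsOddSkHamPath B u v p) {j : ℕ} (hi : 1 ≤ i)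
    (hij : i < j) (hjB : j ≤ B + 1)
    (hclean : ∀ l, i ≤ l → l < j → (u + 1) / 4 ≠ l ∧ (v + 1) / 4 ≠ l) :
    Ascending B p i ∧ Ascending B p j ∨ Descending B p i ∧ Descending B p j := by
  induction j, hij using Nat.le_induction with
  | base =>
    exact h.ascending_or_descending_of_clean hi (by omega) (hclean i le_rfl (by omega)).1
      (hclean i le_rfl (by omega)).2
  | succ j hij ih =>
    have hcj := hclean j (by omega) (by omega)
    rcases ih (by omega) fun l h1 h2 => hclean l h1 (by omega) with ⟨hi, hj⟩ | ⟨hi, hj⟩ <;>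
      rcases h.ascending_or_descending_of_clean (i := j) (by omega) (by omega) hcj.1 hcj.2 with
        ⟨hj', hsucc⟩ | ⟨hj', hsucc⟩
    · exact .inl ⟨hi, hsucc⟩
    · exact absurd hj.1 hj'.1
    · exact absurd hj'.1 hj.1
    · exact .inr ⟨hi, hsucc⟩

theorem ascending_of_clean_below (h : IsOddSkHamPath B u v p) {s : ℕ} (hv : v ≠ 1) (hs : 1 < s)
    (hsB : s ≤ B + 1) (hclean : ∀ l, 1 ≤ l → l < s → (u + 1) / 4 ≠ l ∧ (v + 1) / 4 ≠ l) :
    Ascending B p s :=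
  ((h.ascending_or_descending_of_clean_range le_rfl hs hsB hclean).resolve_right
    fun hd => hd.1.1 (h.entersLow_one hv)).2

theorem descending_of_clean_below (h : IsOddSkHamPath B u v p) {s : ℕ} (hv : v = 1) (hs : 1 < s)
    (hsB : s ≤ B + 1) (hclean : ∀ l, 1 ≤ l → l < s → (u + 1) / 4 ≠ l ∧ (v + 1) / 4 ≠ l) :
    Descending B p s := by
  subst hv
  exact ((h.ascending_or_descending_of_clean_range le_rfl hs hsB hclean).resolve_left
    fun ha => h.isHamPathOn.not_follows_end ha.1.1).2

theorem descending_of_clean_above (h : IsOddSkHamPath B u v p) {s : ℕ} (hu : u ≠ 1) (hs : 1 ≤ s)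
    (hsB : s ≤ B + 1) (hclean : ∀ l, s ≤ l → l ≤ B → (u + 1) / 4 ≠ l ∧ (v + 1) / 4 ≠ l) :
    Descending B p s := by
  obtain rfl | hsB := eq_or_lt_of_le hsB
  · exact ⟨h.not_entersLow_last, h.entersHigh_last hu⟩
  · exact ((h.ascending_or_descending_of_clean_range hs hsB le_rfl
      fun l h1 h2 => hclean l h1 (by omega)).resolve_left fun ha => h.not_entersLow_last ha.2.1).1

theorem end_eq_of_start_eq_one (h : IsOddSkHamPath B u v p) (hu : u = 1) : v = 4*B+1 := by
  subst hu
  have := h.two_le; have := h.odd_end; have := h.end_bounds; have := h.start_ne_end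
  have hvB : (v + 1) / 4 = B := by
    by_contra hvB
    rcases h.ascending_or_descending_of_clean (i := B) (by omega) le_rfl (by omega) hvB with
      ⟨-, hasc⟩ | ⟨-, hdesc⟩
    · exact h.not_entersLow_last hasc.1
    · exact h.isHamPathOn.not_follows_start (h.entersHigh_last_iff.mp hdesc.2)
  by_contra hvd
  have hhigh := (h.boundary_of_end_eq_b (i := B) (by omega) le_rfl (by omega)).1
  exact (h.ascending_of_clean_below (s := B) (by omega) (by omega) (by omega)
    fun l _ _ => ⟨by omega, by omega⟩).2 hhigh

theorem start_eq_of_end_eq_one (h : IsOddSkHamPath B u v p) (hv : v = 1) : u = 5 := by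
  subst hv
  have := h.two_le; have := h.odd_start; have := h.start_bounds; have := h.start_ne_end
  have hlow : ¬EntersLow p 1 := h.isHamPathOn.not_follows_end
  generalize hs : (u + 1) / 4 = s
  obtain rfl | hs1 : s = 1 ∨ 1 < s := by omega
  · by_contra hu5
    exact hlow (h.boundary_of_start_eq_b le_rfl (by omega) (by omega)).1
  have hdesc := h.descending_of_clean_below (s := s) rfl hs1 (by omega)
    fun l _ _ => ⟨by omega, by omega⟩
  obtain hud | hub : u = 4*s+1 ∨ u = 4*s-1 := by omega
  · exact absurd hdesc.2 (h.boundary_of_start_eq_d (by omega) (by omega) hud).1.2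
  obtain hsB | rfl : s < B ∨ s = B := by omega
  · exact absurd (h.boundary_of_start_eq_b (by omega) hsB hub).1 hdesc.1
  obtain ⟨-, hba, ha1⟩ := h.boundary_of_start_eq_b_last hub
  have := h.eq_of_follows_follows (hub ▸ hba) ha1 (x := 2) (by omega) (by omega)
  omega

theorem end_eq_of_block_lt (h : IsOddSkHamPath B u v p) (hu1 : u ≠ 1) (hv1 : v ≠ 1)
    (hlt : (u + 1) / 4 < (v + 1) / 4) : u % 4 = 3 ∧ v = u + 4 := by
  have := h.two_le; have := h.odd_start; have := h.odd_end
  have := h.start_bounds; have := h.end_bounds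
  generalize hs : (u + 1) / 4 = s at hlt
  generalize ht : (v + 1) / 4 = t at hlt
  have hlow : EntersLow p s := by
    obtain rfl | hs1 : s = 1 ∨ 1 < s := by omega
    · exact h.entersLow_one hv1
    · exact (h.ascending_of_clean_below hv1 hs1 (by omega) fun l _ _ => ⟨by omega, by omega⟩).1
  have hub : u = 4*s-1 := by
    by_contra
    exact (h.boundary_of_start_eq_d (by omega) (by omega) (by omega : u = 4*s+1)).1.1 hlow
  obtain ⟨-, hlow', hhigh'⟩ := h.boundary_of_start_eq_b (by omega) (by omega : s < B) hub
  have hts : t = s + 1 := by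
    by_contra
    rcases h.ascending_or_descending_of_clean_range (i := s + 1) (j := t) (by omega) (by omega)
      (by omega) fun l _ _ => ⟨by omega, by omega⟩ with ⟨ha, -⟩ | ⟨hd, -⟩
    exacts [ha.2 hhigh', hd.1 hlow']
  refine ⟨by omega, ?_⟩
  by_contra
  have hvd : v = 4*t+1 := by omega
  exact (h.boundary_of_end_eq_d (by omega) (by omega) hvd).2 (h.descending_of_clean_above
    (s := t + 1) hu1 (by omega) (by omega) fun l _ _ => ⟨by omega, by omega⟩).2

theorem end_eq_of_block_gt (h : IsOddSkHamPath B u v p) (hv1 : v ≠ 1)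
    (hgt : (v + 1) / 4 < (u + 1) / 4) : (u % 4 = 1 ∧ v = u - 4) ∨ (u = 4*B-1 ∧ v = 3) := by
  have := h.two_le; have := h.odd_start; have := h.odd_end
  have := h.start_bounds; have := h.end_bounds
  generalize hs : (u + 1) / 4 = s at hgt
  generalize ht : (v + 1) / 4 = t at hgt
  obtain hvd | hvb : v = 4*t+1 ∨ v = 4*t-1 := by omega
  · obtain ⟨hlow, hhigh⟩ := h.boundary_of_end_eq_d (by omega) (by omega) hvd
    obtain rfl : s = t + 1 := by
      by_contra
      rcases h.ascending_or_descending_of_clean_range (i := t + 1) (j := s) (by omega) (by omega)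
        (by omega) fun l _ _ => ⟨by omega, by omega⟩ with ⟨ha, -⟩ | ⟨hd, -⟩
      exacts [hlow ha.1, hhigh hd.2]
    obtain hud | hub : u = 4*t+5 ∨ u = 4*t+3 := by omega
    · exact .inl ⟨by omega, by omega⟩
    obtain htB | htB : t + 1 < B ∨ t + 1 = B := by omega
    · exact absurd (h.boundary_of_start_eq_b (by omega) htB (by omega)).1 hlow
    · exact absurd (htB ▸ (h.boundary_of_start_eq_b_last (by omega)).1) hhigh
  obtain ⟨hhigh, hdesc⟩ := h.boundary_of_end_eq_b (by omega) (by omega) hvb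
  obtain rfl : t = 1 := by
    by_contra
    exact (h.ascending_of_clean_below hv1 (s := t) (by omega) (by omega)
      fun l _ _ => ⟨by omega, by omega⟩).2 hhigh
  have hdesc : Descending B p s := by
    obtain rfl | hs2 : s = 2 ∨ 2 < s := by omega
    · exact hdesc (by omega)
    · exact ((h.ascending_or_descending_of_clean_range (i := 2) (j := s) (by omega) hs2 (by omega)
        fun l _ _ => ⟨by omega, by omega⟩).resolve_left fun ha => (hdesc (by omega)).1 ha.1.1).2
  obtain hud | hub : u = 4*s+1 ∨ u = 4*s-1 := by omega
  · exact absurd hdesc.2 (h.boundary_of_start_eq_d (by omega) (by omega) hud).1.2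
  obtain hsB | rfl : s < B ∨ s = B := by omega
  · exact absurd (h.boundary_of_start_eq_b (by omega) hsB hub).1 hdesc.1
  · exact .inr ⟨hub, hvb⟩

theorem start_block_ne_end_block (h : IsOddSkHamPath B u v p) :
    (u + 1) / 4 ≠ (v + 1) / 4 := by
  have := h.odd_start; have := h.odd_end; have := h.start_bounds; have := h.end_bounds
  have := h.start_ne_end
  intro hst
  generalize hs : (u + 1) / 4 = s at hst
  obtain hu | hu : u = 4*s+1 ∨ u = 4*s-1 := by omega
  · exact h.end_ne_b_of_start_eq_d (by omega) (by omega) hu (by omega)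
  · exact h.end_ne_d_of_start_eq_b (by omega) (by omega) hu (by omega)

end IsOddSkHamPath

/-- The outgoing vertex paired with the incoming vertex `u`: `pairedEnd B (2j-1) = o_j`. -/
def pairedEnd (B u : ℕ) : ℕ :=
  if u = 1 then 4 * B + 1 else if u = 4 * B - 1 then 3 else if u % 4 = 1 then u - 4 else u + 4

theorem IsOddSkHamPath.end_eq_pairedEnd {B u v : ℕ} {p : List ℕ} (h : IsOddSkHamPath B u v p) :
    v = pairedEnd B u := by
  have := h.two_le; have := h.odd_start; have := h.start_bounds; have := h.end_bounds
  unfold pairedEnd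
  by_cases hu1 : u = 1
  · rw [if_pos hu1, h.end_eq_of_start_eq_one hu1]
  by_cases hv1 : v = 1
  · have := h.start_eq_of_end_eq_one hv1
    split_ifs <;> omega
  rcases lt_or_gt_of_ne h.start_block_ne_end_block with hlt | hgt
  · have := h.end_eq_of_block_lt hu1 hv1 hlt
    split_ifs <;> omega
  · have := h.end_eq_of_block_gt hv1 hgt
    split_ifs <;> omega

theorem oddOut_odd {B m : ℕ} (hB : 2 ≤ B) (hm1 : 1 ≤ m) (hmk : m ≤ 2 * B + 1) :
    oddOut (2 * B + 1) m % 2 = 1 := by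
  unfold oddOut
  simp only [Nat.even_iff]
  split_ifs <;> omega

theorem eq_of_oddOut_eq_pairedEnd {B j m : ℕ} (hB : 2 ≤ B) (hj1 : 1 ≤ j) (hjk : j ≤ 2 * B + 1)
    (hm1 : 1 ≤ m) (hmk : m ≤ 2 * B + 1) (h : oddOut (2 * B + 1) m = pairedEnd B (2 * j - 1)) :
    j = m := by
  unfold oddOut pairedEnd at h
  simp only [Nat.even_iff] at h
  split_ifs at h <;> omega

/-- for odd `k ≥ 5` and `j ≠ m` in `{1, …, k}`, there is no Hamiltonian
path in `S_k` from the incoming vertex `i_j = 2j - 1` to the outgoing vertex `o_m`. -/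
theorem oddSk_no_unpaired_hamPath (k : ℕ) (hk : 5 ≤ k) (hko : Odd k)
    (j m : ℕ) (hj1 : 1 ≤ j) (hjk : j ≤ k) (hm1 : 1 ≤ m) (hmk : m ≤ k) (hjm : j ≠ m) :
    ¬ ∃ p : List ℕ, IsHamPathOn (fun x y => (x, y) ∈ oddEdges k)
        (Finset.Icc 1 (2 * k - 1)) (2 * j - 1) (oddOut k m) p := by
  rintro ⟨p, hp⟩
  obtain ⟨B, rfl⟩ := hko
  have h : IsOddSkHamPath B (2 * j - 1) (oddOut (2 * B + 1) m) p :=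
    ⟨by omega, by omega, oddOut_odd (by omega) hm1 hmk, by
      rwa [show 2 * (2 * B + 1) - 1 = 4 * B + 1 by omega,
        show (fun x y => (x, y) ∈ oddEdges (2 * B + 1)) = SkEdge B from
          funext₂ fun _ _ => propext mem_oddEdges_iff] at hp⟩
  exact hjm (eq_of_oddOut_eq_pairedEnd (by omega) hj1 hjk hm1 hmk h.end_eq_pairedEnd)
end

section
/- For every even integer k ≥ 4 and every j ∈ {1,…,k}, there exists a Hamiltonian path in the digraph S_k from the incoming vertex i_j to the outgoing vertex o_j. -/
/-- The directed edge set of the graph `S_k` for even `k ≥ 4`. -/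
def evenEdges (k : ℕ) : Finset (ℕ × ℕ) :=
  ((Finset.Icc 1 ((k - 2) / 2)).biUnion fun i =>
      {(4*i-2, 4*i-1), (4*i-1, 4*i-2), (4*i-1, 4*i), (4*i, 4*i-1),
        (4*i, 4*i+1), (4*i+1, 4*i)}) ∪
  ((Finset.Icc 1 ((k - 4) / 2)).biUnion fun i => {(4*i-2, 4*i+5), (4*i+1, 4*i+2)}) ∪
  ({(1, 2), (2*k-6, 2*k-1), (2*k-3, 2*k-2), (2*k-2, 1), (2*k-2, 5),
    (2*k-1, 2*k-2)} : Finset (ℕ × ℕ))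

/-- The `m`-th outgoing vertex `o_m` (with `1 ≤ m ≤ k`) of `S_k` for even `k ≥ 4`:
`o_1 = 3`, `o_{k-2} = 2k-1`, `o_{k-1} = 2k-7`, `o_k = 2k-3`, and otherwise
`o_{2j} = 4j+3` and `o_{2j+1} = 4j-3`. -/
def evenOut (k m : ℕ) : ℕ :=
  if m = 1 then 3
  else if m = k - 2 then 2*k - 1
  else if m = k - 1 then 2*k - 7
  else if m = k then 2*k - 3
  else if Even m then 2*m + 3
  else 2*m - 5

/-!
Write `k = 2n + 4`. The vertices `2, …, 4n + 5` form the blocks `4t + 2, …, 4t + 5` (`t ≤ n`),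
each a bidirected path; the forward edges `m → m + 1` lead from `1` up to the hub `4n + 6`, which
points back to `1` and `5`. Following the jump `4s + 2 → 4s + 9`, walking down to `4s + 6` and
repeating gives a ladder that sweeps `4s + 2` and everything from `4s + 6` on, ending with
`4n + 2 → 4n + 7 → 4n + 6` at the hub. A Hamiltonian path from `i_j` to `o_j` is then a short run
inside the block of `i_j`, the ladder above it, the forward run from `1` up to below that block,
and, for even `j`, a last jump into the next block followed by a descent to `o_j`.
-/

def HasHamPathOn {α : Type*} (E : α → α → Prop) (S : Finset α) (u v : α) : Prop :=
  ∃ p, IsHamPathOn E S u v p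

theorem hasHamPathOn_singleton {α : Type*} {E : α → α → Prop} (u : α) :
    HasHamPathOn E {u} u u :=
  ⟨[u], List.nodup_singleton u, List.isChain_singleton u, rfl, rfl, by simp⟩

theorem HasHamPathOn.append {α : Type*} [DecidableEq α] {E : α → α → Prop} {S T : Finset α}
    {u v w z : α} (h₁ : HasHamPathOn E S u v) (h₂ : HasHamPathOn E T w z) (hvw : E v w)
    (hST : Disjoint S T) : HasHamPathOn E (S ∪ T) u z := by
  obtain ⟨p, hp, hpE, hpu, hpv, hpS⟩ := h₁
  obtain ⟨q, hq, hqE, hqw, hqz, hqT⟩ := h₂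
  refine ⟨p ++ q, ?_, ?_, ?_, ?_, fun x => by simp [hpS, hqT]⟩
  · exact List.nodup_append'.2 ⟨hp, hq, fun x hxp hxq =>
      Finset.disjoint_left.1 hST ((hpS x).1 hxp) ((hqT x).1 hxq)⟩
  · exact List.isChain_append.2 ⟨hpE, hqE, by simp_all⟩
  · simp [List.head?_append, hpu]
  · simp [List.getLast?_append, hqz]

theorem hasHamPathOn_Icc_of_succ {E : ℕ → ℕ → Prop} {a b : ℕ} (hab : a ≤ b)
    (hE : ∀ m, a ≤ m → m < b → E m (m + 1)) : HasHamPathOn E (Finset.Icc a b) a b := by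
  induction b, hab using Nat.le_induction with
  | base => simpa using hasHamPathOn_singleton a
  | succ b hab ih =>
    have h := (ih fun m h₁ h₂ => hE m h₁ (by omega)).append (hasHamPathOn_singleton (b + 1))
      (hE b hab (by omega)) (by simp)
    rwa [Finset.union_singleton, Finset.insert_Icc_right_eq_Icc_add_one (by omega)] at h

theorem hasHamPathOn_Icc_of_pred {E : ℕ → ℕ → Prop} {a b : ℕ} (hab : a ≤ b)
    (hE : ∀ m, a ≤ m → m < b → E (m + 1) m) : HasHamPathOn E (Finset.Icc a b) b a := by
  induction b, hab using Nat.le_induction with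
  | base => simpa using hasHamPathOn_singleton a
  | succ b hab ih =>
    have h := (hasHamPathOn_singleton (b + 1)).append (ih fun m h₁ h₂ => hE m h₁ (by omega))
      (hE b hab (by omega)) (by simp)
    rwa [← Finset.insert_eq, Finset.insert_Icc_right_eq_Icc_add_one (by omega)] at h

namespace EvenSk

-- `S_k` for `k = 2n + 4`: the shift keeps vertex labels free of truncated subtraction
-- (the hub `2k - 2` is `4n + 6`, the last vertex `2k - 1` is `4n + 7`).
def Adj (n x y : ℕ) : Prop := (x, y) ∈ evenEdges (2 * n + 4)

variable {n : ℕ}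

theorem adj_iff {x y : ℕ} : Adj n x y ↔
    (∃ i, (1 ≤ i ∧ i ≤ n + 1) ∧ (x = 4*i-2 ∧ y = 4*i-1 ∨ x = 4*i-1 ∧ y = 4*i-2 ∨
      x = 4*i-1 ∧ y = 4*i ∨ x = 4*i ∧ y = 4*i-1 ∨ x = 4*i ∧ y = 4*i+1 ∨ x = 4*i+1 ∧ y = 4*i)) ∨
    (∃ i, (1 ≤ i ∧ i ≤ n) ∧ (x = 4*i-2 ∧ y = 4*i+5 ∨ x = 4*i+1 ∧ y = 4*i+2)) ∨
    x = 1 ∧ y = 2 ∨ x = 4*n+2 ∧ y = 4*n+7 ∨ x = 4*n+5 ∧ y = 4*n+6 ∨ x = 4*n+6 ∧ y = 1 ∨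
      x = 4*n+6 ∧ y = 5 ∨ x = 4*n+7 ∧ y = 4*n+6 := by
  simp only [Adj, evenEdges, Finset.mem_union, Finset.mem_biUnion, Finset.mem_Icc,
    Finset.mem_insert, Finset.mem_singleton, Prod.mk.injEq, or_assoc,
    show (2*n+4-2)/2 = n+1 by omega, show (2*n+4-4)/2 = n by omega,
    show 2*(2*n+4)-6 = 4*n+2 by omega, show 2*(2*n+4)-3 = 4*n+5 by omega,
    show 2*(2*n+4)-2 = 4*n+6 by omega, show 2*(2*n+4)-1 = 4*n+7 by omega]

theorem adj_succ {m : ℕ} (h₁ : 1 ≤ m) (h₂ : m ≤ 4*n+5) : Adj n m (m + 1) := by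
  rw [adj_iff]
  rcases (by omega : m % 4 ≠ 1 ∨ (m = 1 ∨ m = 4*n+5) ∨ m % 4 = 1 ∧ 1 < m ∧ m < 4*n+5) with
    h | h | h
  · exact Or.inl ⟨(m + 2) / 4, by omega, by omega⟩
  · exact Or.inr (Or.inr (by omega))
  · exact Or.inr (Or.inl ⟨m / 4, by omega, by omega⟩)

theorem adj_pred {m : ℕ} (h₁ : 2 ≤ m) (h₂ : m ≤ 4*n+4) (h₃ : m % 4 ≠ 1) : Adj n (m + 1) m :=
  adj_iff.2 <| Or.inl ⟨(m + 2) / 4, by omega, by omega⟩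

theorem adj_cross {i : ℕ} (h : i < n) : Adj n (4*i+2) (4*i+9) :=
  adj_iff.2 <| Or.inr <| Or.inl ⟨i + 1, by omega, by omega⟩

theorem adj_of_special {x y : ℕ} (h : x = 4*n+2 ∧ y = 4*n+7 ∨ x = 4*n+6 ∧ (y = 1 ∨ y = 5) ∨
    x = 4*n+7 ∧ y = 4*n+6) : Adj n x y :=
  adj_iff.2 <| .inr <| .inr <| by omega

theorem hasHamPathOn_Icc {a b : ℕ} (ha : 1 ≤ a) (hab : a ≤ b) (hb : b ≤ 4*n+6) :
    HasHamPathOn (Adj n) (Finset.Icc a b) a b :=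
  hasHamPathOn_Icc_of_succ hab fun _ _ _ => adj_succ (by omega) (by omega)

theorem hasHamPathOn_block {t : ℕ} (h : t ≤ n) :
    HasHamPathOn (Adj n) (Finset.Icc (4*t+3) (4*t+5)) (4*t+5) (4*t+3) :=
  hasHamPathOn_Icc_of_pred (by omega) fun _ _ _ => adj_pred (by omega) (by omega) (by omega)

theorem hasHamPathOn_top : HasHamPathOn (Adj n) (Finset.Icc (4*n+6) (4*n+7)) (4*n+7) (4*n+6) :=
  hasHamPathOn_Icc_of_pred (by omega) fun _ _ _ => adj_of_special (by omega)

theorem hasHamPathOn_ladder {s : ℕ} (h : s ≤ n) :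
    HasHamPathOn (Adj n) (insert (4*s+2) (Finset.Icc (4*s+6) (4*n+7))) (4*s+2) (4*n+6) := by
  induction h using Nat.decreasingInduction with
  | self =>
    rw [Finset.insert_eq]
    exact (hasHamPathOn_singleton _).append hasHamPathOn_top (adj_of_special (by omega))
      (by grind [Finset.disjoint_left])
  | of_succ s hs ih =>
    rw [show insert (4*s+2) (Finset.Icc (4*s+6) (4*n+7)) =
      {4*s+2} ∪ Finset.Icc (4*s+7) (4*s+9) ∪ insert (4*s+6) (Finset.Icc (4*s+10) (4*n+7)) by
      ext; grind]
    exact ((hasHamPathOn_singleton _).append (hasHamPathOn_block hs) (adj_cross hs)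
      (by grind [Finset.disjoint_left])).append ih
      (adj_pred (by omega) (by omega) (by omega)) (by grind [Finset.disjoint_left])

theorem hasHamPathOn_index_one :
    HasHamPathOn (Adj n) (Finset.Icc 1 (4*n+7)) 1 3 := by
  rw [show Finset.Icc 1 (4*n+7) = {1} ∪ insert 2 (Finset.Icc 6 (4*n+7)) ∪
    Finset.Icc 3 5 by ext; grind]
  exact ((hasHamPathOn_singleton 1).append (hasHamPathOn_ladder (Nat.zero_le n))
    (adj_succ le_rfl (by omega)) (by grind [Finset.disjoint_left])).append
    (hasHamPathOn_block (Nat.zero_le n)) (adj_of_special (by omega))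
    (by grind [Finset.disjoint_left])

theorem hasHamPathOn_index_even {m : ℕ} (h : m < n) :
    HasHamPathOn (Adj n) (Finset.Icc 1 (4*n+7)) (4*m+3) (4*m+7) := by
  rw [show Finset.Icc 1 (4*n+7) = Finset.Icc (4*m+3) (4*m+5) ∪
    insert (4*m+6) (Finset.Icc (4*m+10) (4*n+7)) ∪ Finset.Icc 1 (4*m+2) ∪
    Finset.Icc (4*m+7) (4*m+9) by ext; grind]
  exact (((hasHamPathOn_Icc (by omega) (by omega) (by omega)).append
    (hasHamPathOn_ladder h) (adj_succ (by omega) (by omega))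
    (by grind [Finset.disjoint_left])).append
    (hasHamPathOn_Icc le_rfl (by omega) (by omega)) (adj_of_special (by omega))
    (by grind [Finset.disjoint_left])).append
    (hasHamPathOn_block h) (adj_cross h)
    (by grind [Finset.disjoint_left])

theorem hasHamPathOn_index_odd {m : ℕ} (h : m ≤ n) :
    HasHamPathOn (Adj n) (Finset.Icc 1 (4*n+7)) (4*m+5) (4*m+1) := by
  rw [show Finset.Icc 1 (4*n+7) = Finset.Icc (4*m+3) (4*m+5) ∪
    insert (4*m+2) (Finset.Icc (4*m+6) (4*n+7)) ∪ Finset.Icc 1 (4*m+1) by ext; grind]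
  exact ((hasHamPathOn_block h).append (hasHamPathOn_ladder h)
    (adj_pred (by omega) (by omega) (by omega))
    (by grind [Finset.disjoint_left])).append
    (hasHamPathOn_Icc le_rfl (by omega) (by omega)) (adj_of_special (by omega))
    (by grind [Finset.disjoint_left])

theorem hasHamPathOn_index_sub_two :
    HasHamPathOn (Adj n) (Finset.Icc 1 (4*n+7)) (4*n+3) (4*n+7) := by
  rw [show Finset.Icc 1 (4*n+7) = Finset.Icc (4*n+3) (4*n+6) ∪ Finset.Icc 1 (4*n+2) ∪
    {4*n+7} by ext; grind]
  exact ((hasHamPathOn_Icc (by omega) (by omega) le_rfl).append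
    (hasHamPathOn_Icc le_rfl (by omega) (by omega)) (adj_of_special (by omega))
    (by grind [Finset.disjoint_left])).append
    (hasHamPathOn_singleton _) (adj_of_special (by omega))
    (by grind [Finset.disjoint_left])

theorem hasHamPathOn_index_last :
    HasHamPathOn (Adj n) (Finset.Icc 1 (4*n+7)) (4*n+7) (4*n+5) := by
  rw [show Finset.Icc 1 (4*n+7) = Finset.Icc (4*n+6) (4*n+7) ∪ Finset.Icc 1 (4*n+5) by
    ext; grind]
  exact hasHamPathOn_top.append (hasHamPathOn_Icc le_rfl (by omega) (by omega))
    (adj_of_special (by omega)) (by grind [Finset.disjoint_left])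

end EvenSk

theorem evenOut_of_even {k j : ℕ} (hj : Even j) (hjk : j + 2 < k) : evenOut k j = 2*j+3 := by
  have : j ≠ 1 := by rintro rfl; exact Nat.not_even_one hj
  unfold evenOut; split_ifs <;> omega

theorem evenOut_of_odd {k j : ℕ} (hj : Odd j) (h₁ : 3 ≤ j) (h₂ : j < k) (h₃ : j + 2 ≠ k) :
    evenOut k j = 2*j-5 := by
  unfold evenOut; split_ifs <;> first | omega | exact absurd ‹Even j› (Nat.not_even_iff_odd.2 hj)

theorem evenOut_of_add_two_eq {k j : ℕ} (hj : j + 2 = k) (h : j ≠ 1) : evenOut k j = 2*k-1 := by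
  unfold evenOut; split_ifs <;> omega

theorem evenOut_self {k : ℕ} (hk : k ≠ 1) : evenOut k k = 2*k-3 := by
  unfold evenOut; split_ifs <;> omega

open EvenSk in
/-- for even `k ≥ 4` and every `j ∈ {1, …, k}`, there is a Hamiltonian path
in `S_k` from the incoming vertex `i_j = 2j - 1` to the outgoing vertex `o_j`. -/
theorem evenSk_paired_hamPath (k : ℕ) (hk : 4 ≤ k) (hke : Even k)
    (j : ℕ) (hj1 : 1 ≤ j) (hjk : j ≤ k) :
    ∃ p : List ℕ, IsHamPathOn (fun x y => (x, y) ∈ evenEdges k)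
      (Finset.Icc 1 (2 * k - 1)) (2 * j - 1) (evenOut k j) p := by
  obtain ⟨n, rfl⟩ : ∃ n, k = 2 * n + 4 := by
    obtain ⟨c, rfl⟩ := hke
    exact ⟨c - 2, by omega⟩
  rw [show 2 * (2 * n + 4) - 1 = 4 * n + 7 by omega]
  change HasHamPathOn (Adj n) _ _ _
  obtain rfl | hj_ne_one := eq_or_ne j 1
  · exact hasHamPathOn_index_one
  obtain rfl | hj_ne_last := eq_or_ne j (2 * n + 4)
  · rw [evenOut_self (by omega)]
    convert hasHamPathOn_index_last using 1 <;> omega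
  obtain rfl | hj_ne_sub_two := eq_or_ne j (2 * n + 2)
  · rw [evenOut_of_add_two_eq rfl (by omega)]
    convert hasHamPathOn_index_sub_two using 1 <;> omega
  obtain ⟨m, hm | hm⟩ := Nat.even_or_odd' j
  · have hmn : m - 1 < n := by omega
    rw [evenOut_of_even ⟨m, by omega⟩ (by omega)]
    convert hasHamPathOn_index_even hmn using 1 <;> omega
  · have hmn : m - 1 ≤ n := by omega
    rw [evenOut_of_odd ⟨m, hm⟩ (by omega) (by omega) (by omega)]
    convert hasHamPathOn_index_odd hmn using 1 <;> omega
end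

section
/- For every odd integer k ≥ 5 and every j ∈ {1,…,k}, there exists a Hamiltonian path in the digraph S_k from the incoming vertex i_j to the outgoing vertex o_j. -/
/-!
Write `k = 2m + 1`, so that `S_k` lives on `{1, …, 4m+1}`. Besides the ascending path
`1 → 2 → ⋯ → 4m+1`, every block `4i+1, 4i, 4i-1, 4i-2` can be run through downwards, the bottom
`4i-2` of a block leads to the top `4i+5` of the next one, and the two wrap-around edges
`4m-2 → 1` and `4m → 5` return to the start. Each of the `k` required Hamiltonian paths is a
concatenation of a run of descending blocks with ascending segments and a few single edges.
-/

theorem List.nodup_of_length_le_card_toFinset {α : Type*} [DecidableEq α] {l : List α}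
    (h : l.length ≤ l.toFinset.card) : l.Nodup :=
  Multiset.toFinset_card_eq_card_iff_nodup.1 (le_antisymm (List.toFinset_card_le l) h)

theorem isHamPathOn_of_length_le {α : Type*} [DecidableEq α] {E : α → α → Prop}
    {V : Finset α} {u v : α} {p : List α} (hchain : p.IsChain E) (hu : p.head? = some u)
    (hv : p.getLast? = some v) (hmem : ∀ x, x ∈ p ↔ x ∈ V) (hlen : p.length ≤ V.card) :
    IsHamPathOn E V u v p := by
  have hV : p.toFinset = V := by ext x; simp [hmem]
  exact ⟨List.nodup_of_length_le_card_toFinset (hV ▸ hlen), hchain, hu, hv, hmem⟩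

def oddAdj (k x y : ℕ) : Prop := (x, y) ∈ oddEdges k

section Edges

variable {m x y : ℕ}

theorem oddAdj_iff : oddAdj (2 * m + 1) x y ↔
    (∃ a, (1 ≤ a ∧ a ≤ m) ∧
      (x = 4 * a - 2 ∧ y = 4 * a - 1 ∨ x = 4 * a - 1 ∧ y = 4 * a - 2 ∨
        x = 4 * a - 1 ∧ y = 4 * a ∨ x = 4 * a ∧ y = 4 * a - 1 ∨
        x = 4 * a ∧ y = 4 * a + 1 ∨ x = 4 * a + 1 ∧ y = 4 * a)) ∨
    (∃ a, (1 ≤ a ∧ a ≤ m - 1) ∧ (x = 4 * a - 2 ∧ y = 4 * a + 5 ∨ x = 4 * a + 1 ∧ y = 4 * a + 2)) ∨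
    x = 1 ∧ y = 2 ∨ x = 4 * m - 2 ∧ y = 1 ∨ x = 4 * m ∧ y = 5 := by
  rw [oddAdj, oddEdges, show (2 * m + 1 - 1) / 2 = m by omega,
    show (2 * m + 1 - 3) / 2 = m - 1 by omega, show 2 * (2 * m + 1) - 4 = 4 * m - 2 by omega,
    show 2 * (2 * m + 1) - 2 = 4 * m by omega]
  simp only [Finset.mem_union, Finset.mem_biUnion, Finset.mem_Icc, Finset.mem_insert,
    Finset.mem_singleton, Prod.mk.injEq, or_assoc]

theorem oddAdj_succ (hx : 1 ≤ x) (hxm : x ≤ 4 * m) (hy : y = x + 1) :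
    oddAdj (2 * m + 1) x y := by
  rw [oddAdj_iff]
  obtain h | h | h | h | h : x = 1 ∨ x % 4 = 1 ∧ 5 ≤ x ∨ x % 4 = 2 ∨ x % 4 = 3 ∨ x % 4 = 0 := by
    omega
  · omega
  · exact Or.inr <| Or.inl ⟨(x - 1) / 4, by omega, by omega⟩
  · exact Or.inl ⟨(x + 2) / 4, by omega, by omega⟩
  · exact Or.inl ⟨(x + 1) / 4, by omega, by omega⟩
  · exact Or.inl ⟨x / 4, by omega, by omega⟩

theorem oddAdj_pred (hx : 3 ≤ x) (hxm : x ≤ 4 * m + 1) (hx4 : x % 4 ≠ 2) (hy : y + 1 = x) :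
    oddAdj (2 * m + 1) x y := by
  rw [oddAdj_iff]
  obtain h | h | h : x % 4 = 1 ∨ x % 4 = 3 ∨ x % 4 = 0 := by omega
  · exact Or.inl ⟨(x - 1) / 4, by omega, by omega⟩
  · exact Or.inl ⟨(x + 1) / 4, by omega, by omega⟩
  · exact Or.inl ⟨x / 4, by omega, by omega⟩

theorem oddAdj_jump (hx : 2 ≤ x) (hxm : x ≤ 4 * m - 6) (hx4 : x % 4 = 2) (hy : y = x + 7) :
    oddAdj (2 * m + 1) x y := by
  rw [oddAdj_iff]
  exact Or.inr <| Or.inl ⟨(x + 2) / 4, by omega, by omega⟩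

theorem oddAdj_wrap_one : oddAdj (2 * m + 1) (4 * m - 2) 1 := by
  rw [oddAdj_iff]; omega

theorem oddAdj_wrap_five : oddAdj (2 * m + 1) (4 * m) 5 := by
  rw [oddAdj_iff]; omega

theorem isChain_oddAdj_range' {s n : ℕ} (hs : 1 ≤ s) (hn : s + n ≤ 4 * m + 2) :
    (List.range' s n).IsChain (oddAdj (2 * m + 1)) :=
  (List.isChain_range' s n 1).imp_of_mem_imp fun a b ha hb hab => by
    rw [List.mem_range'_1] at ha hb
    exact oddAdj_succ (by omega) (by omega) hab

end Edges

def descBlocks : ℕ → ℕ → List ℕ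
  | _, 0 => []
  | a, n + 1 => (a + 3) :: (a + 2) :: (a + 1) :: a :: descBlocks (a + 4) n

theorem mem_descBlocks {x : ℕ} : ∀ {a n : ℕ}, x ∈ descBlocks a n ↔ a ≤ x ∧ x < a + 4 * n
  | _, 0 => by simp [descBlocks]
  | a, n + 1 => by
    simp only [descBlocks, List.mem_cons, mem_descBlocks (a := a + 4) (n := n)]
    omega

theorem length_descBlocks : ∀ {a n : ℕ}, (descBlocks a n).length = 4 * n
  | _, 0 => rfl
  | a, n + 1 => by simp only [descBlocks, List.length_cons, length_descBlocks]; ring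

theorem isChain_cons_descBlocks_append {m : ℕ} {l : List ℕ} :
    ∀ {a n : ℕ}, a % 4 = 2 → 2 ≤ a → a + 4 * n ≤ 4 * m - 2 →
      ((a + 4 * n) :: l).IsChain (oddAdj (2 * m + 1)) →
      (a :: (descBlocks (a + 4) n ++ l)).IsChain (oddAdj (2 * m + 1))
  | _, 0, _, _, _, h => h
  | a, n + 1, ha4, ha, han, h => by
    have tail := isChain_cons_descBlocks_append (m := m) (l := l) (a := a + 4) (n := n)
      (by omega) (by omega) (by omega) (by rwa [show a + 4 + 4 * n = a + 4 * (n + 1) by ring])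
    simp only [descBlocks, List.cons_append, List.isChain_cons_cons]
    exact ⟨oddAdj_jump (by omega) (by omega) ha4 (by omega),
      oddAdj_pred (by omega) (by omega) (by omega) (by omega),
      oddAdj_pred (by omega) (by omega) (by omega) (by omega),
      oddAdj_pred (by omega) (by omega) (by omega) (by omega), tail⟩

section HamPaths

variable {m t : ℕ}

theorem isHamPathOn_ascending :
    IsHamPathOn (oddAdj (2 * m + 1)) (Finset.Icc 1 (4 * m + 1)) 1 (4 * m + 1)
      (List.range' 1 (4 * m + 1)) := by
  refine isHamPathOn_of_length_le (isChain_oddAdj_range' le_rfl (by omega)) rfl ?_ ?_ ?_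
  · simp [List.getLast?_range']
  · simp only [List.mem_range'_1, Finset.mem_Icc]; omega
  · simp

theorem isHamPathOn_odd_index (ht : 1 ≤ t) (htm : t ≤ m) :
    IsHamPathOn (oddAdj (2 * m + 1)) (Finset.Icc 1 (4 * m + 1)) (4 * t + 1) (4 * t - 3)
      ((4 * t + 1) :: (4 * t) :: (4 * t - 1) :: (4 * t - 2) ::
        (descBlocks (4 * t + 2) (m - t) ++ List.range' 1 (4 * t - 3))) := by
  have hwrap : ((4 * m - 2) :: List.range' 1 (4 * t - 3)).IsChain (oddAdj (2 * m + 1)) := by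
    refine List.isChain_cons.2 ⟨fun y hy => ?_, isChain_oddAdj_range' le_rfl (by omega)⟩
    simp only [List.head?_range', Option.mem_def] at hy
    obtain rfl : y = 1 := by grind
    exact oddAdj_wrap_one
  have hblocks := isChain_cons_descBlocks_append (m := m) (a := 4 * t - 2) (n := m - t)
    (by omega) (by omega) (by omega) (by rwa [show 4 * t - 2 + 4 * (m - t) = 4 * m - 2 by omega])
  rw [show 4 * t - 2 + 4 = 4 * t + 2 by omega] at hblocks
  refine isHamPathOn_of_length_le ?_ rfl ?_ ?_ ?_
  · simp only [List.isChain_cons_cons]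
    exact ⟨oddAdj_pred (by omega) (by omega) (by omega) (by omega),
      oddAdj_pred (by omega) (by omega) (by omega) (by omega),
      oddAdj_pred (by omega) (by omega) (by omega) (by omega), hblocks⟩
  · simp [List.getLast?_cons, List.getLast?_range', show 4 * t - 3 ≠ 0 by omega]
  · intro x
    simp only [List.mem_cons, List.mem_append, mem_descBlocks, List.mem_range'_1,
      Finset.mem_Icc]
    omega
  · simp only [List.length_cons, List.length_append, length_descBlocks, List.length_range',
      Nat.card_Icc]
    omega

theorem isHamPathOn_even_index (ht : 1 ≤ t) (htm : t < m) :
    IsHamPathOn (oddAdj (2 * m + 1)) (Finset.Icc 1 (4 * m + 1)) (4 * t - 1) (4 * t + 3)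
      ((4 * t - 1) :: (4 * t) :: (4 * t + 1) :: (4 * t + 2) ::
        (descBlocks (4 * t + 6) (m - 1 - t) ++
          (List.range' 1 (4 * t - 2) ++ [4 * t + 5, 4 * t + 4, 4 * t + 3]))) := by
  have hback : (List.range' 1 (4 * t - 2) ++ [4 * t + 5, 4 * t + 4, 4 * t + 3]).IsChain
      (oddAdj (2 * m + 1)) := by
    refine (isChain_oddAdj_range' le_rfl (by omega)).append ?_ fun x hx y hy => ?_
    · simp only [List.isChain_cons_cons, List.isChain_singleton, and_true]
      exact ⟨oddAdj_pred (by omega) (by omega) (by omega) (by omega),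
        oddAdj_pred (by omega) (by omega) (by omega) (by omega)⟩
    · simp only [List.getLast?_range', Option.mem_def, List.head?_cons, Option.some.injEq]
        at hx hy
      exact oddAdj_jump (by grind) (by grind) (by grind) (by grind)
  have hwrap : ((4 * m - 2) :: (List.range' 1 (4 * t - 2) ++
      [4 * t + 5, 4 * t + 4, 4 * t + 3])).IsChain (oddAdj (2 * m + 1)) := by
    refine List.isChain_cons.2 ⟨fun y hy => ?_, hback⟩
    simp only [List.head?_append, List.head?_range', Option.mem_def] at hy
    obtain rfl : y = 1 := by grind
    exact oddAdj_wrap_one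
  have hblocks := isChain_cons_descBlocks_append (m := m) (a := 4 * t + 2) (n := m - 1 - t)
    (by omega) (by omega) (by omega)
    (by rwa [show 4 * t + 2 + 4 * (m - 1 - t) = 4 * m - 2 by omega])
  refine isHamPathOn_of_length_le ?_ rfl ?_ ?_ ?_
  · simp only [List.isChain_cons_cons]
    exact ⟨oddAdj_succ (by omega) (by omega) (by omega),
      oddAdj_succ (by omega) (by omega) (by omega),
      oddAdj_succ (by omega) (by omega) (by omega), hblocks⟩
  · simp [List.getLast?_cons]
  · intro x
    simp only [List.mem_cons, List.mem_append, mem_descBlocks, List.mem_range'_1, List.not_mem_nil,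
      or_false, Finset.mem_Icc]
    omega
  · simp only [List.length_cons, List.length_append, length_descBlocks, List.length_range',
      List.length_nil, Nat.card_Icc]
    omega

theorem isHamPathOn_last_even_index (hm : 2 ≤ m) :
    IsHamPathOn (oddAdj (2 * m + 1)) (Finset.Icc 1 (4 * m + 1)) (4 * m - 1) 3
      ((4 * m - 1) :: (4 * m - 2) :: 1 :: 2 ::
        (descBlocks 6 (m - 2) ++ [4 * m + 1, 4 * m, 5, 4, 3])) := by
  have hblocks := isChain_cons_descBlocks_append (m := m) (a := 2) (n := m - 2)
    (l := [4 * m + 1, 4 * m, 5, 4, 3]) rfl le_rfl (by omega) (by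
      simp only [List.isChain_cons_cons, List.isChain_singleton, and_true]
      exact ⟨oddAdj_jump (by omega) (by omega) (by omega) (by omega),
        oddAdj_pred (by omega) (by omega) (by omega) (by omega), oddAdj_wrap_five,
        oddAdj_pred (by omega) (by omega) (by omega) (by omega),
        oddAdj_pred (by omega) (by omega) (by omega) (by omega)⟩)
  refine isHamPathOn_of_length_le ?_ rfl ?_ ?_ ?_
  · simp only [List.isChain_cons_cons]
    exact ⟨oddAdj_pred (by omega) (by omega) (by omega) (by omega), oddAdj_wrap_one,
      oddAdj_succ (by omega) (by omega) (by omega), hblocks⟩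
  · simp [List.getLast?_cons]
  · intro x
    simp only [List.mem_cons, List.mem_append, mem_descBlocks, List.not_mem_nil,
      or_false, Finset.mem_Icc]
    omega
  · simp only [List.length_cons, List.length_append, length_descBlocks,
      List.length_nil, Nat.card_Icc]
    omega

end HamPaths

/-- for odd `k ≥ 5` and every `j ∈ {1, …, k}`, there is a Hamiltonian path
in `S_k` from the incoming vertex `i_j = 2j - 1` to the outgoing vertex `o_j`. -/
theorem oddSk_paired_hamPath (k : ℕ) (hk : 5 ≤ k) (hko : Odd k)
    (j : ℕ) (hj1 : 1 ≤ j) (hjk : j ≤ k) :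
    ∃ p : List ℕ, IsHamPathOn (fun x y => (x, y) ∈ oddEdges k)
      (Finset.Icc 1 (2 * k - 1)) (2 * j - 1) (oddOut k j) p := by
  obtain ⟨m, rfl⟩ := hko
  rw [show 2 * (2 * m + 1) - 1 = 4 * m + 1 by omega]
  obtain ⟨t, rfl | rfl⟩ := Nat.even_or_odd' j
  · obtain ht | rfl : t < m ∨ t = m := by omega
    · have hout : oddOut (2 * m + 1) (2 * t) = 4 * t + 3 := by
        simp only [oddOut, Nat.even_iff]; split_ifs <;> omega
      rw [hout, show 2 * (2 * t) - 1 = 4 * t - 1 by omega]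
      exact ⟨_, isHamPathOn_even_index (by omega) ht⟩
    · have hout : oddOut (2 * t + 1) (2 * t) = 3 := by
        simp only [oddOut]; split_ifs <;> omega
      rw [hout, show 2 * (2 * t) - 1 = 4 * t - 1 by omega]
      exact ⟨_, isHamPathOn_last_even_index (by omega)⟩
  · obtain rfl | ht : t = 0 ∨ 1 ≤ t := by omega
    · have hout : oddOut (2 * m + 1) (2 * 0 + 1) = 4 * m + 1 := by
        rw [oddOut, if_pos rfl]; omega
      rw [hout]
      exact ⟨_, isHamPathOn_ascending⟩
    · have hout : oddOut (2 * m + 1) (2 * t + 1) = 4 * t - 3 := by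
        simp only [oddOut, Nat.even_iff]; split_ifs <;> omega
      rw [hout, show 2 * (2 * t + 1) - 1 = 4 * t + 1 by omega]
      exact ⟨_, isHamPathOn_odd_index ht (by omega)⟩
end
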